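/- arXiv:2309.12277 — 7 statements merged into one kernel-verified Lean document; each statement's English description precedes it below -/
import Mathlib

section
/- Let f : ℝⁿ → ℝⁿ and let α > 0. Suppose that (i) f is continuous on ℝⁿ; (ii) f is locally injective, i.e. every x ∈ ℝⁿ admits a neighbourhood on which f is injective; (iii) f is α-covering at each x ∈ ℝⁿ. Then f is a bijection of ℝⁿ onto ℝⁿ, and its inverse f⁻¹ : ℝⁿ → ℝⁿ is Lipschitz continuous on ℝⁿ with constant α⁻¹, i.e. ‖f⁻¹(y₁) − f⁻¹(y₂)‖ ≤ α⁻¹‖y₁ − y₂‖ for all y₁, y₂ ∈ ℝⁿ. -/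
open Metric Set
open scoped ENNReal NNReal

noncomputable section

variable {E F : Type*} [NormedAddCommGroup E] [NormedAddCommGroup F]

/-- `f` is `α`-covering at `x`: for every `ε > 0` there is `r ∈ (0, ε]` with
`B̄(f x, α r) ⊆ f (B̄(x, r))`. -/
def AlphaCoveringAt (f : E → F) (x : E) (α : ℝ) : Prop :=
  ∀ ε > (0:ℝ), ∃ r : ℝ, 0 < r ∧ r ≤ ε ∧
    closedBall (f x) (α * r) ⊆ f '' closedBall x r

/-- The covering bound `cov(f, x)`: supremum of all `α > 0` for which `f` is
`α`-covering at `x`. -/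
def covBound (f : E → F) (x : E) : ℝ≥0∞ :=
  ⨆ (α : ℝ≥0) (_ : 0 < α ∧ AlphaCoveringAt f x (α : ℝ)), (α : ℝ≥0∞)

/-- `f` is linearly open around `xb` with constant `α`. -/
def LinOpenWith (f : E → F) (xb : E) (α : ℝ) : Prop :=
  ∃ U ∈ nhds xb, ∃ V ∈ nhds (f xb), ∀ x ∈ U, ∀ r > (0:ℝ),
    ball (f x) (α * r) ∩ V ⊆ f '' ball x r

/-- The exact linear openness bound `lop(f, xb)` (`0` if no constant works). -/
def lopBound (f : E → F) (xb : E) : ℝ≥0∞ :=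
  ⨆ (α : ℝ≥0) (_ : 0 < α ∧ LinOpenWith f xb (α : ℝ)), (α : ℝ≥0∞)

/-- `ℓ` is a Lipschitz constant of `h` on some neighbourhood of `xb`. -/
def IsLipConstAround (h : E → F) (xb : E) (ℓ : ℝ) : Prop :=
  ∃ U ∈ nhds xb, ∀ x₁ ∈ U, ∀ x₂ ∈ U, ‖h x₁ - h x₂‖ ≤ ℓ * ‖x₁ - x₂‖

/-- `lip(h, xb)`: infimum of all `ℓ > 0` which are Lipschitz constants of `h`
on some neighbourhood of `xb` (`∞` if `h` is not locally Lipschitz at `xb`). -/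
def lipBound (h : E → F) (xb : E) : ℝ≥0∞ :=
  ⨅ (ℓ : ℝ≥0) (_ : 0 < ℓ ∧ IsLipConstAround h xb (ℓ : ℝ)), (ℓ : ℝ≥0∞)

/-- `β` is a metric injectivity constant for `g` on some closed ball around `xb`. -/
def IsInjConstAround (g : E → F) (xb : E) (β : ℝ) : Prop :=
  ∃ δ > (0:ℝ), ∀ x₁ ∈ closedBall xb δ, ∀ x₂ ∈ closedBall xb δ,
    β * ‖x₁ - x₂‖ ≤ ‖g x₁ - g x₂‖

/-- `g` is metrically injective around `xb`. -/
def MetricallyInjectiveAround (g : E → F) (xb : E) : Prop :=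
  ∃ β > (0:ℝ), IsInjConstAround g xb β

/-- The metric injection bound `inj(g, xb)`: supremum of all valid `β > 0`. -/
def injBound (g : E → F) (xb : E) : ℝ≥0∞ :=
  ⨆ (β : ℝ≥0) (_ : 0 < β ∧ IsInjConstAround g xb (β : ℝ)), (β : ℝ≥0∞)

/-- `h` is a strict `μ`-estimator of `f` at `xb`: `h xb = f xb` and
`lip(f - h, xb) ≤ μ`. -/
def IsStrictEstimator (f h : E → F) (xb : E) (μ : ℝ≥0) : Prop :=
  h xb = f xb ∧ lipBound (fun x => f x - h x) xb ≤ (μ : ℝ≥0∞)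

/-- `g` is strongly (metrically) regular around `xb`: it is linearly open around
`xb` and the set-valued inverse `g⁻¹` has a single-valued graphical localization
around `(g xb, xb)`. -/
def StronglyRegularAround (g : E → F) (xb : E) : Prop :=
  (∃ α > (0:ℝ), LinOpenWith g xb α) ∧
  ∃ V ∈ nhds (g xb), ∃ U ∈ nhds xb, ∀ y ∈ V, ∃ x : E, g ⁻¹' {y} ∩ U = {x}

/-! A covering step moves `f z` towards `y` by `α r` at the cost of moving `z` by `r`; minimising
`dist (f z) y` over a compact set that such steps cannot leave shows that every `y` has a preimage
within `α⁻¹ * dist (f x) y` of any given `x`. Hence `f` is surjective, and `f⁻¹` is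
`α⁻¹`-Lipschitz as soon as `f` is injective.

For injectivity: `f` is open and locally injective, hence a local homeomorphism. The same
estimate, with an injectivity radius that is uniform on compact sets, lifts every segment from
`f x₀` through `f` starting at `x₀`. These lifts form a lift of the straight-line contraction of
the target, so their endpoints define a continuous right inverse `g` with `g (f x₀) = x₀`. Then
`g ∘ f` and `id` are lifts of `f` through itself that agree at `x₀`, and the source is connected,
so `g ∘ f = id`.
-/

theorem AlphaCoveringAt.exists_dist_add_le [NormedSpace ℝ F] {f : E → F} {x : E} {α : ℝ}
    (hα : 0 < α) (hcov : AlphaCoveringAt f x α) {y : F} (hy : f x ≠ y) :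
    ∃ r > 0, ∃ x', dist x' x ≤ r ∧ dist (f x') y + α * r ≤ dist (f x) y := by
  have hd : 0 < dist (f x) y := dist_pos.mpr hy
  obtain ⟨r, hr, hrd, hball⟩ := hcov (α⁻¹ * dist (f x) y) (by positivity)
  have hαr : α * r ≤ dist (f x) y := by
    calc α * r ≤ α * (α⁻¹ * dist (f x) y) := by gcongr
      _ = dist (f x) y := by field_simp
  set w := AffineMap.lineMap (f x) y (α * r / dist (f x) y)
  have hw : dist w (f x) = α * r := by
    rw [dist_lineMap_left, Real.norm_eq_abs, abs_of_nonneg (by positivity),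
      div_mul_cancel₀ _ hd.ne']
  have hwy : dist w y = dist (f x) y - α * r := by
    have hc : α * r / dist (f x) y ≤ 1 := (div_le_one hd).mpr hαr
    rw [dist_lineMap_right, Real.norm_eq_abs, abs_of_nonneg (by linarith), sub_mul,
      div_mul_cancel₀ _ hd.ne', one_mul]
  obtain ⟨x', hx', hfx'⟩ := hball (mem_closedBall.mpr hw.le)
  exact ⟨r, hr, x', mem_closedBall.mp hx', by rw [hfx', hwy]; linarith⟩

theorem exists_eq_and_dist_le_of_forall_alphaCoveringAt [ProperSpace E] [NormedSpace ℝ F]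
    {f : E → F} {α : ℝ} (hα : 0 < α) (hf : Continuous f) (hcov : ∀ x, AlphaCoveringAt f x α)
    (x : E) (y : F) : ∃ z, f z = y ∧ dist z x ≤ α⁻¹ * dist (f x) y := by
  set K := {z | α * dist z x + dist (f z) y ≤ dist (f x) y}
  have hK : IsCompact K := by
    refine (isCompact_closedBall x (α⁻¹ * dist (f x) y)).of_isClosed_subset
      (isClosed_le (by fun_prop) continuous_const) fun z hz => ?_
    replace hz : α * dist z x + dist (f z) y ≤ dist (f x) y := hz
    rw [mem_closedBall, le_inv_mul_iff₀ hα]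
    linarith [dist_nonneg (x := f z) (y := y)]
  have hxK : x ∈ K := by simp [K]
  obtain ⟨z, hzK, hmin⟩ := hK.exists_isMinOn ⟨x, hxK⟩
    (f := fun z => dist (f z) y) (hf.dist continuous_const).continuousOn
  have hzy : f z = y := by
    by_contra hne
    obtain ⟨r, hr, z', hz'z, hz'⟩ := (hcov z).exists_dist_add_le hα hne
    have hz'K : z' ∈ K := by
      have hzK : α * dist z x + dist (f z) y ≤ dist (f x) y := hzK
      have : α * dist z' x ≤ α * r + α * dist z x := by
        rw [← mul_add]; gcongr; linarith [dist_triangle z' z x]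
      show α * dist z' x + dist (f z') y ≤ dist (f x) y
      linarith
    linarith [isMinOn_iff.mp hmin z' hz'K, mul_pos hα hr]
  refine ⟨z, hzy, ?_⟩
  have hzK' : α * dist z x + dist (f z) y ≤ dist (f x) y := hzK
  rw [le_inv_mul_iff₀ hα]
  linarith [dist_nonneg (x := f z) (y := y)]

theorem dist_le_of_injOn_closedBall [ProperSpace E] [NormedSpace ℝ F] {f : E → F} {α : ℝ}
    (hα : 0 < α) (hf : Continuous f) (hcov : ∀ x, AlphaCoveringAt f x α) {p : E} {δ : ℝ}
    (hδ : InjOn f (closedBall p δ)) {a b : E} (ha : dist a p + α⁻¹ * dist (f a) (f b) ≤ δ)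
    (hb : dist b p ≤ δ) : dist b a ≤ α⁻¹ * dist (f a) (f b) := by
  obtain ⟨z, hfz, hz⟩ := exists_eq_and_dist_le_of_forall_alphaCoveringAt hα hf hcov a (f b)
  have hzp : dist z p ≤ δ := by linarith [dist_triangle z a p]
  obtain rfl := hδ (mem_closedBall.mpr hzp) (mem_closedBall.mpr hb) hfz
  exact hz

theorem isOpenMap_of_forall_alphaCoveringAt {f : E → F} {α : ℝ} (hα : 0 < α)
    (hcov : ∀ x, AlphaCoveringAt f x α) : IsOpenMap f := by
  refine IsOpenMap.of_nhds_le fun x s hs => ?_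
  obtain ⟨ε, hε, hεs⟩ := Metric.mem_nhds_iff.mp (Filter.mem_map.mp hs)
  obtain ⟨r, hr, hrε, hball⟩ := hcov x (ε / 2) (by positivity)
  refine Filter.mem_of_superset (closedBall_mem_nhds _ (by positivity)) (hball.trans ?_)
  rintro _ ⟨z, hz, rfl⟩
  exact hεs ((closedBall_subset_ball (by linarith)) hz)

theorem IsLocallyInjective.isLocalHomeomorph {X Y : Type*} [TopologicalSpace X]
    [TopologicalSpace Y] {f : X → Y} (hinj : IsLocallyInjective f) (hf : Continuous f)
    (ho : IsOpenMap f) : IsLocalHomeomorph f :=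
  isLocalHomeomorph_iff_isOpenEmbedding_restrict.mpr fun x =>
    let ⟨U, hU, hxU, hUinj⟩ := hinj x
    ⟨U, hU.mem_nhds hxU, .of_continuous_injective_isOpenMap (hf.comp continuous_subtype_val)
      (injOn_iff_injective.mp hUinj) (ho.domRestrict hU)⟩

theorem IsLocallyInjective.exists_forall_injOn_closedBall {X Y : Type*} [PseudoMetricSpace X]
    {f : X → Y} (hinj : IsLocallyInjective f) {K : Set X} (hK : IsCompact K) :
    ∃ δ > 0, ∀ x ∈ K, InjOn f (closedBall x δ) := by
  choose U hU hxU hUinj using hinj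
  obtain ⟨δ, hδ, hKδ⟩ := lebesgue_number_lemma_of_metric hK hU
    fun x _ => mem_iUnion.mpr ⟨x, hxU x⟩
  refine ⟨δ / 2, by positivity, fun x hx => ?_⟩
  obtain ⟨i, hi⟩ := hKδ x hx
  exact (hUinj i).mono ((closedBall_subset_ball (by linarith)).trans hi)

section SegmentLift

variable [NormedSpace ℝ F]

def IsSegmentLift (f : E → F) (α : ℝ) (x₀ : E) (y : F) (s : ℝ) (u : ℝ → E) : Prop :=
  u 0 = x₀ ∧ (∀ t ∈ Icc 0 s, f (u t) = AffineMap.lineMap (f x₀) y t) ∧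
    ∀ t ∈ Icc 0 s, ∀ t' ∈ Icc 0 s, dist (u t) (u t') ≤ α⁻¹ * dist (f x₀) y * dist t t'

namespace IsSegmentLift

variable {f : E → F} {α : ℝ} {x₀ : E} {y : F} {s : ℝ} {u : ℝ → E}

theorem const (f : E → F) (α : ℝ) (x₀ : E) (y : F) : IsSegmentLift f α x₀ y 0 fun _ => x₀ := by
  refine ⟨rfl, fun t ht => ?_, fun t ht t' ht' => ?_⟩
  · rw [le_antisymm ht.2 ht.1, AffineMap.lineMap_apply_zero]
  · simp [le_antisymm ht.2 ht.1, le_antisymm ht'.2 ht'.1]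

theorem mono (hu : IsSegmentLift f α x₀ y s u) {s' : ℝ} (h : s' ≤ s) :
    IsSegmentLift f α x₀ y s' u :=
  ⟨hu.1, fun t ht => hu.2.1 t ⟨ht.1, ht.2.trans h⟩,
    fun t ht t' ht' => hu.2.2 t ⟨ht.1, ht.2.trans h⟩ t' ⟨ht'.1, ht'.2.trans h⟩⟩

theorem extend [ProperSpace E] (hα : 0 < α) (hf : Continuous f)
    (hcov : ∀ x, AlphaCoveringAt f x α) (hu : IsSegmentLift f α x₀ y s u) (hs : 0 ≤ s)
    {δ η : ℝ} (hδ : InjOn f (closedBall (u s) δ)) (hη : α⁻¹ * dist (f x₀) y * η ≤ δ) :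
    ∃ v, IsSegmentLift f α x₀ y (s + η) v := by
  obtain ⟨hu0, huf, huL⟩ := hu
  set c := α⁻¹ * dist (f x₀) y
  have hc : 0 ≤ c := by positivity
  have hseg (t t' : ℝ) :
      α⁻¹ * dist (AffineMap.lineMap (f x₀) y t) (AffineMap.lineMap (f x₀) y t') =
        c * dist t t' := by
    rw [dist_lineMap_lineMap]; ring
  have hadd {a b d : ℝ} (hab : a ≤ b) (hbd : b ≤ d) :
      c * dist a b + c * dist b d = c * dist a d := by
    have hb : b ∈ segment ℝ a d := by rw [segment_eq_Icc (hab.trans hbd)]; exact ⟨hab, hbd⟩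
    rw [← mul_add, dist_add_dist_of_mem_segment hb]
  choose w hwf hws using fun t : ℝ => exists_eq_and_dist_le_of_forall_alphaCoveringAt hα hf hcov
    (u s) (AffineMap.lineMap (f x₀) y t)
  simp only [huf s ⟨hs, le_rfl⟩, hseg] at hws
  let v t := if t ≤ s then u t else w t
  refine ⟨v, by simp [v, hs, hu0], fun t ht => ?_, fun t ht t' ht' => ?_⟩
  · by_cases hts : t ≤ s
    · simp [v, hts, huf t ⟨ht.1, hts⟩]
    · simp [v, hts, hwf]
  wlog htt : t ≤ t' generalizing t t'
  · rw [dist_comm, dist_comm t]; exact this t' ht' t ht (le_of_not_ge htt)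
  rcases le_or_gt t' s with ht's | hst'
  · simpa only [v, ht's, htt.trans ht's, if_true] using
      huL t ⟨ht.1, htt.trans ht's⟩ t' ⟨ht'.1, ht's⟩
  have hvt' : v t' = w t' := if_neg (not_le.mpr hst')
  have hcη : c * dist s t' ≤ δ := by
    refine le_trans (mul_le_mul_of_nonneg_left ?_ hc) hη
    rw [Real.dist_eq, abs_of_nonpos (by linarith)]
    linarith [ht'.2]
  rcases le_or_gt t s with hts | hst
  · have hvt : v t = u t := if_pos hts
    calc dist (v t) (v t') ≤ dist (u t) (u s) + dist (w t') (u s) := by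
          rw [hvt, hvt', dist_comm (w t')]; exact dist_triangle _ _ _
      _ ≤ c * dist t s + c * dist s t' := add_le_add (huL t ⟨ht.1, hts⟩ s ⟨hs, le_rfl⟩) (hws t')
      _ = c * dist t t' := hadd hts hst'.le
  · have hvt : v t = w t := if_neg (not_le.mpr hst)
    have hwt : dist (w t) (u s) + α⁻¹ * dist (f (w t)) (f (w t')) ≤ δ := by
      rw [hwf, hwf, hseg]
      calc dist (w t) (u s) + c * dist t t' ≤ c * dist s t + c * dist t t' := by
            gcongr; exact hws t
        _ = c * dist s t' := hadd hst.le htt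
        _ ≤ δ := hcη
    rw [hvt, hvt', dist_comm]
    simpa only [hwf, hseg] using dist_le_of_injOn_closedBall hα hf hcov hδ hwt ((hws t').trans hcη)

end IsSegmentLift

end SegmentLift

theorem exists_isSegmentLift [ProperSpace E] [NormedSpace ℝ F] {f : E → F} {α : ℝ} (hα : 0 < α)
    (hf : Continuous f) (hcov : ∀ x, AlphaCoveringAt f x α) (hinj : IsLocallyInjective f)
    (x₀ : E) (y : F) : ∃ u, IsSegmentLift f α x₀ y 1 u := by
  set c := α⁻¹ * dist (f x₀) y
  have hc : 0 ≤ c := by positivity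
  -- lifts over `[0, s]`, `s ≤ 1`, stay in the compact ball `closedBall x₀ c`, where the
  -- injectivity radius of `f` is bounded below; so every extension step can have length `η`
  obtain ⟨δ, hδ, hinjδ⟩ := hinj.exists_forall_injOn_closedBall (isCompact_closedBall x₀ c)
  set η := δ / (c + 1)
  have hη : 0 < η := by positivity
  have hcη : c * η ≤ δ := by
    rw [mul_div_assoc', div_le_iff₀ (by positivity)]; nlinarith
  have hlift (n : ℕ) : ∃ u, IsSegmentLift f α x₀ y (min 1 (n * η)) u := by
    induction n with
    | zero => exact ⟨_, by simpa using IsSegmentLift.const f α x₀ y⟩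
    | succ n ih =>
      obtain ⟨u, hu⟩ := ih
      set s := min 1 (n * η)
      have hs : 0 ≤ s := le_min zero_le_one (by positivity)
      have hus : u s ∈ closedBall x₀ c := by
        rw [mem_closedBall, ← hu.1]
        calc dist (u s) (u 0) ≤ c * dist s 0 := hu.2.2 s ⟨hs, le_rfl⟩ 0 ⟨le_rfl, hs⟩
          _ ≤ c * 1 := by
            gcongr
            rw [Real.dist_eq, sub_zero, abs_of_nonneg hs]
            exact min_le_left _ _
          _ = c := mul_one c
      obtain ⟨v, hv⟩ := hu.extend hα hf hcov hs (hinjδ _ hus) hcη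
      refine ⟨v, hv.mono ?_⟩
      rw [← min_add_add_right]
      push_cast
      exact min_le_min (by linarith) (by linarith)
  obtain ⟨n, hn⟩ := exists_nat_ge (1 / η)
  obtain ⟨u, hu⟩ := hlift n
  exact ⟨u, by rwa [min_eq_left ((div_le_iff₀ hη).mp hn)] at hu⟩

theorem exists_continuous_rightInverse_of_forall_alphaCoveringAt [ProperSpace E]
    [NormedSpace ℝ F] {f : E → F} {α : ℝ} (hα : 0 < α) (hf : Continuous f)
    (hcov : ∀ x, AlphaCoveringAt f x α) (hinj : IsLocallyInjective f) (x₀ : E) :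
    ∃ g : F → E, Continuous g ∧ Function.RightInverse g f ∧ g (f x₀) = x₀ := by
  choose u hu using exists_isSegmentLift hα hf hcov hinj x₀
  let H : C(unitInterval × F, F) := ⟨fun p => AffineMap.lineMap (f x₀) p.2 (p.1 : ℝ), by fun_prop⟩
  have hG : Continuous fun p : unitInterval × F => u p.2 p.1 := by
    refine (hinj.isLocalHomeomorph hf (isOpenMap_of_forall_alphaCoveringAt hα hcov)).continuous_lift
      (T2Space.isSeparatedMap f) H (funext fun p => (hu p.2).2.1 p.1 p.1.2) ?_ fun y => ?_
    · simpa only [Set.Icc.coe_zero, (hu _).1] using continuous_const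
    · exact (LipschitzOnWith.of_dist_le' (hu y).2.2).continuousOn.comp_continuous
        continuous_subtype_val fun t => t.2
  refine ⟨fun y => u y 1,
    hG.comp ((continuous_const (y := (1 : unitInterval))).prodMk continuous_id), fun y => ?_, ?_⟩
  · simpa using (hu y).2.1 1 ⟨zero_le_one, le_rfl⟩
  · have h := (hu (f x₀)).2.2 1 ⟨zero_le_one, le_rfl⟩ 0 ⟨le_rfl, zero_le_one⟩
    rwa [dist_self, mul_zero, zero_mul, dist_le_zero, (hu _).1] at h

theorem injective_of_forall_alphaCoveringAt [NormedSpace ℝ E] [ProperSpace E] [NormedSpace ℝ F]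
    {f : E → F} {α : ℝ} (hα : 0 < α) (hf : Continuous f) (hcov : ∀ x, AlphaCoveringAt f x α)
    (hinj : IsLocallyInjective f) : Function.Injective f := by
  obtain ⟨g, hg, hfg, hg0⟩ :=
    exists_continuous_rightInverse_of_forall_alphaCoveringAt hα hf hcov hinj 0
  have hgf : g ∘ f = id := (T2Space.isSeparatedMap f).eq_of_comp_eq hinj (hg.comp hf)
    continuous_id (funext fun x => hfg (f x)) 0 hg0
  exact Function.LeftInverse.injective (congrFun hgf)

theorem dist_le_of_forall_alphaCoveringAt [ProperSpace E] [NormedSpace ℝ F] {f : E → F} {α : ℝ}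
    (hα : 0 < α) (hf : Continuous f) (hcov : ∀ x, AlphaCoveringAt f x α)
    (hfi : Function.Injective f) {g : F → E} (hg : Function.RightInverse g f) (y₁ y₂ : F) :
    dist (g y₁) (g y₂) ≤ α⁻¹ * dist y₁ y₂ := by
  obtain ⟨z, hz, hzd⟩ := exists_eq_and_dist_le_of_forall_alphaCoveringAt hα hf hcov (g y₂) y₁
  rw [hg y₂, dist_comm y₂] at hzd
  rwa [← hfi (hz.trans (hg y₁).symm)]

/-- Arutyunov–Zhukovskiy global inversion theorem: a continuous, locally
injective map `ℝⁿ → ℝⁿ` that is `α`-covering at every point is a bijection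
whose inverse is Lipschitz with constant `α⁻¹`. -/
theorem stmt0 (n : ℕ) (f : EuclideanSpace ℝ (Fin n) → EuclideanSpace ℝ (Fin n))
    (α : ℝ) (hα : 0 < α)
    (hcont : Continuous f)
    (hinj : ∀ x : EuclideanSpace ℝ (Fin n), ∃ U ∈ nhds x, Set.InjOn f U)
    (hcov : ∀ x : EuclideanSpace ℝ (Fin n), AlphaCoveringAt f x α) :
    Function.Bijective f ∧
    ∃ g : EuclideanSpace ℝ (Fin n) → EuclideanSpace ℝ (Fin n),
      (∀ x, g (f x) = x) ∧ (∀ y, f (g y) = y) ∧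
      ∀ y₁ y₂, ‖g y₁ - g y₂‖ ≤ α⁻¹ * ‖y₁ - y₂‖ := by
  have hfi : Function.Injective f :=
    injective_of_forall_alphaCoveringAt hα hcont hcov (isLocallyInjective_iff_nhds.mpr hinj)
  have hfs : Function.Surjective f := fun y =>
    (exists_eq_and_dist_le_of_forall_alphaCoveringAt hα hcont hcov 0 y).imp fun _ h => h.1
  have hg : Function.RightInverse (Function.surjInv hfs) f := Function.rightInverse_surjInv hfs
  refine ⟨⟨hfi, hfs⟩, Function.surjInv hfs, Function.leftInverse_surjInv ⟨hfi, hfs⟩, hg,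
    fun y₁ y₂ => ?_⟩
  simpa only [dist_eq_norm] using dist_le_of_forall_alphaCoveringAt hα hcont hcov hfi hg y₁ y₂
end
end

section
/- Let f : ℝⁿ → ℝᵐ, x̄ ∈ ℝⁿ and η ≥ 0. If f admits a strict η-estimator h at x̄ (i.e. h(x̄) = f(x̄) and lip(f − h, x̄) ≤ η) and inj(h, x̄) > η, then f is metrically injective around x̄ with inj(f, x̄) ≥ inj(h, x̄) − η. -/
open Metric Set
open scoped ENNReal NNReal

noncomputable section

variable {E F : Type*} [NormedAddCommGroup E] [NormedAddCommGroup F]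

/-! Writing `f = h + (f - h)`, the reverse triangle inequality shows that near `xb`
`‖f x₁ - f x₂‖ ≥ (β - ℓ) ‖x₁ - x₂‖` whenever `β` is an injectivity constant of `h` and `ℓ` a
Lipschitz constant of `f - h`. Letting `ℓ ↓ η` and `β ↑ inj(h, xb)` gives
`inj(f, xb) ≥ inj(h, xb) - η`, which is positive because `η < inj(h, xb)`. -/

lemma IsLipConstAround.mono {g : E → F} {xb : E} {ℓ ℓ' : ℝ} (hg : IsLipConstAround g xb ℓ)
    (hℓ : ℓ ≤ ℓ') : IsLipConstAround g xb ℓ' := by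
  obtain ⟨U, hU, hlip⟩ := hg
  exact ⟨U, hU, fun x₁ hx₁ x₂ hx₂ =>
    (hlip x₁ hx₁ x₂ hx₂).trans (mul_le_mul_of_nonneg_right hℓ (norm_nonneg _))⟩

lemma isLipConstAround_of_lipBound_lt {g : E → F} {xb : E} {ℓ : ℝ≥0}
    (hg : lipBound g xb < ℓ) : IsLipConstAround g xb ℓ := by
  obtain ⟨ℓ', ⟨-, hℓ'⟩, hlt⟩ :
      ∃ ℓ' : ℝ≥0, (0 < ℓ' ∧ IsLipConstAround g xb ℓ') ∧ (ℓ' : ℝ≥0∞) < ℓ := by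
    simpa only [lipBound, iInf_lt_iff, exists_prop] using hg
  exact hℓ'.mono (by exact_mod_cast hlt.le)

lemma IsInjConstAround.of_isLipConstAround_sub {f h : E → F} {xb : E} {β ℓ : ℝ}
    (hh : IsInjConstAround h xb β) (hfh : IsLipConstAround (fun x => f x - h x) xb ℓ) :
    IsInjConstAround f xb (β - ℓ) := by
  obtain ⟨δ, hδ, hinj⟩ := hh
  obtain ⟨U, hU, hlip⟩ := hfh
  obtain ⟨ε, hε, hεU⟩ := Metric.mem_nhds_iff.1 hU
  have hball : closedBall xb (min δ (ε / 2)) ⊆ closedBall xb δ ∩ U := fun x hx =>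
    ⟨closedBall_subset_closedBall (min_le_left _ _) hx,
      hεU (closedBall_subset_ball ((min_le_right _ _).trans_lt (half_lt_self hε)) hx)⟩
  refine ⟨min δ (ε / 2), by positivity, fun x₁ hx₁ x₂ hx₂ => ?_⟩
  obtain ⟨hx₁δ, hx₁U⟩ := hball hx₁
  obtain ⟨hx₂δ, hx₂U⟩ := hball hx₂
  have htri := norm_sub_norm_le (h x₁ - h x₂) ((f x₂ - h x₂) - (f x₁ - h x₁))
  rw [norm_sub_rev (f x₂ - h x₂),
    show h x₁ - h x₂ - ((f x₂ - h x₂) - (f x₁ - h x₁)) = f x₁ - f x₂ by abel] at htri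
  rw [sub_mul]
  linarith [hinj x₁ hx₁δ x₂ hx₂δ, hlip x₁ hx₁U x₂ hx₂U]

lemma coe_le_injBound {g : E → F} {xb : E} {β : ℝ≥0} (hβ : 0 < β)
    (hg : IsInjConstAround g xb β) : (β : ℝ≥0∞) ≤ injBound g xb :=
  le_iSup₂_of_le β ⟨hβ, hg⟩ le_rfl

lemma MetricallyInjectiveAround.of_injBound_pos {g : E → F} {xb : E} (hg : 0 < injBound g xb) :
    MetricallyInjectiveAround g xb := by
  obtain ⟨β, ⟨hβ, hg⟩, -⟩ :
      ∃ β : ℝ≥0, (0 < β ∧ IsInjConstAround g xb β) ∧ 0 < (β : ℝ≥0∞) := by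
    simpa only [injBound, lt_iSup_iff, exists_prop] using hg
  exact ⟨β, hβ, hg⟩

lemma coe_le_injBound_add {f h : E → F} {xb : E} {β ℓ : ℝ≥0}
    (hh : IsInjConstAround h xb β) (hfh : IsLipConstAround (fun x => f x - h x) xb ℓ) :
    (β : ℝ≥0∞) ≤ injBound f xb + ℓ := by
  rcases le_or_gt β ℓ with hβℓ | hℓβ
  · exact le_add_left (by exact_mod_cast hβℓ)
  · rw [← tsub_le_iff_right, ← ENNReal.coe_sub]
    refine coe_le_injBound (tsub_pos_of_lt hℓβ) ?_
    rw [NNReal.coe_sub hℓβ.le]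
    exact hh.of_isLipConstAround_sub hfh

theorem injBound_le_injBound_add {f h : E → F} {xb : E} {η : ℝ≥0}
    (hfh : lipBound (fun x => f x - h x) xb ≤ η) : injBound h xb ≤ injBound f xb + η := by
  refine iSup₂_le fun β hβ => ENNReal.le_of_forall_pos_le_add fun ε hε _ => ?_
  have hlip : IsLipConstAround (fun x => f x - h x) xb ↑(η + ε) :=
    isLipConstAround_of_lipBound_lt
      (hfh.trans_lt (by exact_mod_cast lt_add_of_pos_right η hε))
  simpa only [ENNReal.coe_add, add_assoc] using coe_le_injBound_add hβ.2 hlip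

/-- Metric injectivity via strict estimators: if `f` admits a strict
`η`-estimator `h` at `xb` with `inj(h, xb) > η`, then `f` is metrically
injective around `xb` with `inj(f, xb) ≥ inj(h, xb) - η`. -/
theorem stmt4 (n m : ℕ)
    (f h : EuclideanSpace ℝ (Fin n) → EuclideanSpace ℝ (Fin m))
    (xb : EuclideanSpace ℝ (Fin n)) (η : ℝ≥0)
    (hest : IsStrictEstimator f h xb η)
    (hgt : (η : ℝ≥0∞) < injBound h xb) :
    MetricallyInjectiveAround f xb ∧
    injBound h xb - (η : ℝ≥0∞) ≤ injBound f xb := by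
  have hbound : injBound h xb ≤ injBound f xb + η := injBound_le_injBound_add hest.2
  have hpos : 0 < injBound f xb :=
    lt_of_add_lt_add_right (by simpa only [zero_add] using hgt.trans_le hbound)
  exact ⟨.of_injBound_pos hpos, tsub_le_iff_right.2 hbound⟩
end
end

section
/- Let f : ℝⁿ → ℝᵐ be continuous at x̄ ∈ ℝⁿ. If f is linearly open around x̄ (with some constant α > 0) and metrically injective around x̄, then f is strongly regular around x̄; more precisely, for every α ∈ (0, lop(f, x̄)) and every β ∈ (0, inj(f, x̄)) there exist r₀ > 0 and a mapping f♯ : B̄(f(x̄), αr₀) → ℝⁿ such that f⁻¹(y) ∩ B̄(x̄, r₀) = {f♯(y)} for every y ∈ B̄(f(x̄), αr₀), and ‖f♯(y₁) − f♯(y₂)‖ ≤ β⁻¹‖y₁ − y₂‖ for all y₁, y₂ ∈ B̄(f(x̄), αr₀). -/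
/-! Linear openness with constant `α` gives, for `α' < α` and all small `r`,
`B̄(f xb, α' r) ⊆ f '' B̄(xb, r)`; on such a ball the injectivity estimate
`β ‖x₁ - x₂‖ ≤ ‖f x₁ - f x₂‖` makes the choice of preimage unique and `β⁻¹`-Lipschitz. -/

open Metric Set
open scoped ENNReal NNReal

noncomputable section

variable {E F : Type*} [NormedAddCommGroup E] [NormedAddCommGroup F]

open Filter Topology

section

variable {f : E → F} {xb : E}

theorem IsInjConstAround.mono {β β' : ℝ} (hinj : IsInjConstAround f xb β) (hβ' : β' ≤ β) :
    IsInjConstAround f xb β' := by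
  obtain ⟨δ, hδ, h⟩ := hinj
  exact ⟨δ, hδ, fun x₁ hx₁ x₂ hx₂ =>
    (mul_le_mul_of_nonneg_right hβ' (norm_nonneg _)).trans (h x₁ hx₁ x₂ hx₂)⟩

theorem IsInjConstAround.eventually_closedBall {β : ℝ} (hinj : IsInjConstAround f xb β) :
    ∀ᶠ r in 𝓝[>] (0 : ℝ), ∀ x₁ ∈ closedBall xb r, ∀ x₂ ∈ closedBall xb r,
      β * ‖x₁ - x₂‖ ≤ ‖f x₁ - f x₂‖ := by
  obtain ⟨δ, hδ, h⟩ := hinj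
  filter_upwards [nhdsWithin_le_nhds (eventually_lt_nhds hδ)] with r hr x₁ hx₁ x₂ hx₂
  exact h x₁ (closedBall_subset_closedBall hr.le hx₁) x₂ (closedBall_subset_closedBall hr.le hx₂)

theorem LinOpenWith.eventually_closedBall_subset_image {α α' : ℝ} (hlo : LinOpenWith f xb α)
    (hα' : α' < α) :
    ∀ᶠ r in 𝓝[>] (0 : ℝ), closedBall (f xb) (α' * r) ⊆ f '' closedBall xb r := by
  obtain ⟨U, hU, V, hV, hcov⟩ := hlo
  obtain ⟨ρ, hρ, hρV⟩ := nhds_basis_closedBall.mem_iff.mp hV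
  have hsmall : ∀ᶠ r in 𝓝 (0 : ℝ), α' * r < ρ :=
    ((continuous_const_mul α').tendsto' 0 0 (mul_zero α')).eventually_lt_const hρ
  filter_upwards [self_mem_nhdsWithin, nhdsWithin_le_nhds hsmall] with r (hr : 0 < r) hrρ y hy
  have hyα : y ∈ ball (f xb) (α * r) :=
    mem_ball.mpr (lt_of_le_of_lt hy (mul_lt_mul_of_pos_right hα' hr))
  obtain ⟨x, hx, rfl⟩ := hcov xb (mem_of_mem_nhds hU) r hr
    ⟨hyα, hρV (closedBall_subset_closedBall hrρ.le hy)⟩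
  exact ⟨x, ball_subset_closedBall hx, rfl⟩

theorem exists_lipschitz_localization_of_subset_image {s : Set E} {t : Set F} {β : ℝ}
    (hβ : 0 < β) (hts : t ⊆ f '' s)
    (hinj : ∀ x₁ ∈ s, ∀ x₂ ∈ s, β * ‖x₁ - x₂‖ ≤ ‖f x₁ - f x₂‖) :
    ∃ fs : F → E, (∀ y ∈ t, f ⁻¹' {y} ∩ s = {fs y}) ∧
      ∀ y₁ ∈ t, ∀ y₂ ∈ t, ‖fs y₁ - fs y₂‖ ≤ β⁻¹ * ‖y₁ - y₂‖ := by
  have hInjOn : InjOn f s := fun x₁ hx₁ x₂ hx₂ hfx => by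
    have h := hinj x₁ hx₁ x₂ hx₂
    rw [hfx, sub_self, norm_zero] at h
    exact sub_eq_zero.mp (norm_le_zero_iff.mp (nonpos_of_mul_nonpos_right h hβ))
  have hmem (y) (hy : y ∈ t) : Function.invFunOn f s y ∈ s := Function.invFunOn_mem (hts hy)
  have hinv (y) (hy : y ∈ t) : f (Function.invFunOn f s y) = y := Function.invFunOn_eq (hts hy)
  refine ⟨Function.invFunOn f s, fun y hy => ?_, fun y₁ hy₁ y₂ hy₂ => ?_⟩
  · ext x
    refine ⟨fun ⟨hfx, hx⟩ => hInjOn hx (hmem y hy) ((hinv y hy).trans hfx.symm).symm, ?_⟩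
    rintro rfl
    exact ⟨hinv y hy, hmem y hy⟩
  · rw [inv_mul_eq_div, le_div_iff₀ hβ, mul_comm]
    simpa only [hinv y₁ hy₁, hinv y₂ hy₂] using hinj _ (hmem y₁ hy₁) _ (hmem y₂ hy₂)

theorem LinOpenWith.exists_lipschitz_localization {α α' β : ℝ} (hlo : LinOpenWith f xb α)
    (hα' : α' < α) (hinj : IsInjConstAround f xb β) (hβ : 0 < β) :
    ∃ r₀ > (0 : ℝ), ∃ fs : F → E,
      (∀ y ∈ closedBall (f xb) (α' * r₀), f ⁻¹' {y} ∩ closedBall xb r₀ = {fs y}) ∧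
      ∀ y₁ ∈ closedBall (f xb) (α' * r₀), ∀ y₂ ∈ closedBall (f xb) (α' * r₀),
        ‖fs y₁ - fs y₂‖ ≤ β⁻¹ * ‖y₁ - y₂‖ := by
  obtain ⟨r₀, hr₀, hcov, hinj₀⟩ := (eventually_mem_nhdsWithin.and
    ((hlo.eventually_closedBall_subset_image hα').and hinj.eventually_closedBall)).exists
  exact ⟨r₀, hr₀, exists_lipschitz_localization_of_subset_image hβ hcov hinj₀⟩

theorem StronglyRegularAround.of_linOpenWith {α β : ℝ} (hα : 0 < α) (hlo : LinOpenWith f xb α)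
    (hβ : 0 < β) (hinj : IsInjConstAround f xb β) : StronglyRegularAround f xb := by
  obtain ⟨r₀, hr₀, fs, hfs, -⟩ := hlo.exists_lipschitz_localization (half_lt_self hα) hinj hβ
  exact ⟨⟨α, hα, hlo⟩, closedBall (f xb) (α / 2 * r₀), closedBall_mem_nhds _ (by positivity),
    closedBall xb r₀, closedBall_mem_nhds _ hr₀, fun y hy => ⟨fs y, hfs y hy⟩⟩

theorem exists_linOpenWith_of_lt_lopBound {α : ℝ≥0} (hα : (α : ℝ≥0∞) < lopBound f xb) :
    ∃ α₁ : ℝ≥0, α < α₁ ∧ LinOpenWith f xb α₁ := by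
  obtain ⟨α₁, hα₁⟩ := lt_iSup_iff.mp hα
  obtain ⟨⟨-, hlo⟩, hlt⟩ := lt_iSup_iff.mp hα₁
  exact ⟨α₁, ENNReal.coe_lt_coe.mp hlt, hlo⟩

theorem isInjConstAround_of_lt_injBound {β : ℝ≥0} (hβ : (β : ℝ≥0∞) < injBound f xb) :
    IsInjConstAround f xb β := by
  obtain ⟨β₁, hβ₁⟩ := lt_iSup_iff.mp hβ
  obtain ⟨⟨-, hinj⟩, hlt⟩ := lt_iSup_iff.mp hβ₁
  exact hinj.mono (NNReal.coe_le_coe.mpr (ENNReal.coe_lt_coe.mp hlt).le)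

end

theorem stmt6_general (n m : ℕ)
    (f : EuclideanSpace ℝ (Fin n) → EuclideanSpace ℝ (Fin m))
    (xb : EuclideanSpace ℝ (Fin n))
    (hlo : ∃ α > (0:ℝ), LinOpenWith f xb α)
    (hmi : MetricallyInjectiveAround f xb) :
    StronglyRegularAround f xb ∧
    ∀ α : ℝ≥0, 0 < α → (α : ℝ≥0∞) < lopBound f xb →
    ∀ β : ℝ≥0, 0 < β → (β : ℝ≥0∞) < injBound f xb →
    ∃ r₀ > (0:ℝ), ∃ fs : EuclideanSpace ℝ (Fin m) → EuclideanSpace ℝ (Fin n),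
      (∀ y ∈ closedBall (f xb) ((α : ℝ) * r₀),
        f ⁻¹' {y} ∩ closedBall xb r₀ = {fs y}) ∧
      ∀ y₁ ∈ closedBall (f xb) ((α : ℝ) * r₀),
        ∀ y₂ ∈ closedBall (f xb) ((α : ℝ) * r₀),
          ‖fs y₁ - fs y₂‖ ≤ ((β : ℝ))⁻¹ * ‖y₁ - y₂‖ := by
  obtain ⟨α₀, hα₀, hlo₀⟩ := hlo
  obtain ⟨β₀, hβ₀, hinj₀⟩ := hmi
  refine ⟨.of_linOpenWith hα₀ hlo₀ hβ₀ hinj₀, fun α _ hα β hβ hβinj => ?_⟩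
  obtain ⟨α₁, hαα₁, hlo₁⟩ := exists_linOpenWith_of_lt_lopBound hα
  exact hlo₁.exists_lipschitz_localization (NNReal.coe_lt_coe.mpr hαα₁)
    (isInjConstAround_of_lt_injBound hβinj) hβ

/-- If `f` is continuous at `xb`, linearly open around `xb` and metrically
injective around `xb`, then `f` is strongly regular around `xb`; more
precisely, for every `α ∈ (0, lop(f, xb))` and `β ∈ (0, inj(f, xb))` there are
`r₀ > 0` and a single-valued localization `fs` of `f⁻¹` on `B̄(f xb, α r₀)`
which is Lipschitz with constant `β⁻¹`. -/
theorem stmt6 (n m : ℕ)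
    (f : EuclideanSpace ℝ (Fin n) → EuclideanSpace ℝ (Fin m))
    (xb : EuclideanSpace ℝ (Fin n))
    (hc : ContinuousAt f xb)
    (hlo : ∃ α > (0:ℝ), LinOpenWith f xb α)
    (hmi : MetricallyInjectiveAround f xb) :
    StronglyRegularAround f xb ∧
    ∀ α : ℝ≥0, 0 < α → (α : ℝ≥0∞) < lopBound f xb →
    ∀ β : ℝ≥0, 0 < β → (β : ℝ≥0∞) < injBound f xb →
    ∃ r₀ > (0:ℝ), ∃ fs : EuclideanSpace ℝ (Fin m) → EuclideanSpace ℝ (Fin n),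
      (∀ y ∈ closedBall (f xb) ((α : ℝ) * r₀),
        f ⁻¹' {y} ∩ closedBall xb r₀ = {fs y}) ∧
      ∀ y₁ ∈ closedBall (f xb) ((α : ℝ) * r₀),
        ∀ y₂ ∈ closedBall (f xb) ((α : ℝ) * r₀),
          ‖fs y₁ - fs y₂‖ ≤ ((β : ℝ))⁻¹ * ‖y₁ - y₂‖ :=
  stmt6_general n m f xb hlo hmi
end
end

section
/- Let f : ℝⁿ → ℝᵐ be continuous at x̄ ∈ ℝⁿ and linearly open around x̄. Suppose that for every κ > lop(f, x̄)⁻¹ there exist neighbourhoods U_κ of x̄ and V_κ of f(x̄) and a mapping f♯ : V_κ → ℝⁿ such that f⁻¹(y) ∩ U_κ = {f♯(y)} for every y ∈ V_κ and ‖f♯(y₁) − f♯(y₂)‖ ≤ κ‖y₁ − y₂‖ for all y₁, y₂ ∈ V_κ. Then f is metrically injective around x̄, and inj(f, x̄) ≥ lop(f, x̄). -/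
open Metric Set
open scoped ENNReal NNReal

noncomputable section

variable {E F : Type*} [NormedAddCommGroup E] [NormedAddCommGroup F]

/-- If `f` is continuous at `xb`, linearly open around `xb`, and for every
`κ > lop(f, xb)⁻¹` the inverse `f⁻¹` admits a single-valued graphical
localization around `(f xb, xb)` which is Lipschitz with constant `κ`, then
`f` is metrically injective around `xb` with `inj(f, xb) ≥ lop(f, xb)`. -/
theorem stmt7 (n m : ℕ)
    (f : EuclideanSpace ℝ (Fin n) → EuclideanSpace ℝ (Fin m))
    (xb : EuclideanSpace ℝ (Fin n))
    (hc : ContinuousAt f xb)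
    (hlo : ∃ α > (0:ℝ), LinOpenWith f xb α)
    (hloc : ∀ κ : ℝ≥0, (lopBound f xb)⁻¹ < (κ : ℝ≥0∞) →
      ∃ U ∈ nhds xb, ∃ V ∈ nhds (f xb),
        ∃ fs : EuclideanSpace ℝ (Fin m) → EuclideanSpace ℝ (Fin n),
          (∀ y ∈ V, f ⁻¹' {y} ∩ U = {fs y}) ∧
          ∀ y₁ ∈ V, ∀ y₂ ∈ V, ‖fs y₁ - fs y₂‖ ≤ (κ : ℝ) * ‖y₁ - y₂‖) :
    MetricallyInjectiveAround f xb ∧ lopBound f xb ≤ injBound f xb := by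
  classical
  obtain ⟨α, hα, hαlo⟩ := hlo
  have hlop_pos : 0 < lopBound f xb := by
    set a : ℝ≥0 := ⟨α, hα.le⟩ with ha_def
    have hpa : 0 < a ∧ LinOpenWith f xb (a : ℝ) := ⟨by exact_mod_cast hα, hαlo⟩
    have hle : (a : ℝ≥0∞) ≤ lopBound f xb :=
      le_iSup₂ (f := fun (β : ℝ≥0) (_ : 0 < β ∧ LinOpenWith f xb (β : ℝ)) => (β : ℝ≥0∞)) a hpa
    refine lt_of_lt_of_le ?_ hle
    exact ENNReal.coe_pos.mpr hpa.1
  have key : ∀ κ : ℝ≥0, (lopBound f xb)⁻¹ < (κ : ℝ≥0∞) →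
      0 < κ ∧ IsInjConstAround f xb ((κ : ℝ)⁻¹) := by
    intro κ hκ
    have hκ0 : 0 < κ := by
      rcases eq_or_lt_of_le (show 0 ≤ κ from zero_le) with h | h
      · rw [← h] at hκ; simp at hκ
      · exact h
    obtain ⟨U, hU, V, hV, fs, hfs, hlip⟩ := hloc κ hκ
    have hUV : U ∩ f ⁻¹' V ∈ nhds xb := Filter.inter_mem hU (hc.preimage_mem_nhds hV)
    obtain ⟨δ, hδ, hball⟩ := Metric.nhds_basis_closedBall.mem_iff.mp hUV
    refine ⟨hκ0, δ, hδ, ?_⟩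
    intro x₁ h1 x₂ h2
    have hx1 := hball h1
    have hx2 := hball h2
    have e1 : fs (f x₁) = x₁ := by
      have hm : x₁ ∈ f ⁻¹' {f x₁} ∩ U := ⟨rfl, hx1.1⟩
      rw [hfs (f x₁) hx1.2] at hm
      exact hm.symm
    have e2 : fs (f x₂) = x₂ := by
      have hm : x₂ ∈ f ⁻¹' {f x₂} ∩ U := ⟨rfl, hx2.1⟩
      rw [hfs (f x₂) hx2.2] at hm
      exact hm.symm
    have hle : ‖x₁ - x₂‖ ≤ (κ : ℝ) * ‖f x₁ - f x₂‖ := by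
      have := hlip (f x₁) hx1.2 (f x₂) hx2.2
      rwa [e1, e2] at this
    have hκR : (0:ℝ) < (κ : ℝ) := by exact_mod_cast hκ0
    rw [inv_mul_le_iff₀ hκR]
    exact hle
  have hinj : MetricallyInjectiveAround f xb := by
    have hlt : (lopBound f xb)⁻¹ < ⊤ := ENNReal.inv_lt_top.mpr hlop_pos
    obtain ⟨κ, hκ1, -⟩ := ENNReal.lt_iff_exists_nnreal_btwn.mp hlt
    obtain ⟨hκ0, hic⟩ := key κ hκ1
    exact ⟨(κ : ℝ)⁻¹, by positivity, hic⟩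
  refine ⟨hinj, ?_⟩
  refine ENNReal.le_of_forall_nnreal_lt fun c hc' => ?_
  rcases eq_or_lt_of_le (show 0 ≤ c from zero_le) with h0 | h0
  · rw [← h0]; simp
  have hc_ne : (c : ℝ≥0∞) ≠ 0 := by exact_mod_cast h0.ne'
  have hlt : (lopBound f xb)⁻¹ < ((c⁻¹ : ℝ≥0) : ℝ≥0∞) := by
    rw [ENNReal.coe_inv h0.ne']
    exact ENNReal.inv_lt_inv.mpr hc'
  obtain ⟨κ, hκ1, hκ2⟩ := ENNReal.lt_iff_exists_nnreal_btwn.mp hlt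
  obtain ⟨hκ0, hic⟩ := key κ hκ1
  have hκc : κ < c⁻¹ := by exact_mod_cast hκ2
  have hcκ : c ≤ κ⁻¹ := by
    have h1 : (κ:ℝ) < (c:ℝ)⁻¹ := by
      rw [← NNReal.coe_inv]; exact_mod_cast hκc
    have hκR : (0:ℝ) < (κ:ℝ) := by exact_mod_cast hκ0
    have hcR : (0:ℝ) < (c:ℝ) := by exact_mod_cast h0
    have h2 : (c:ℝ) ≤ (κ:ℝ)⁻¹ := by
      have hk : (κ:ℝ) * (κ:ℝ)⁻¹ = 1 := mul_inv_cancel₀ (ne_of_gt hκR)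
      have hcc : (c:ℝ) * (c:ℝ)⁻¹ = 1 := mul_inv_cancel₀ (ne_of_gt hcR)
      nlinarith [inv_pos.mpr hκR, inv_pos.mpr hcR]
    rw [← NNReal.coe_le_coe, NNReal.coe_inv]
    exact h2
  have hsup : ((κ⁻¹ : ℝ≥0) : ℝ≥0∞) ≤ injBound f xb := by
    refine le_iSup₂_of_le (κ⁻¹ : ℝ≥0) ⟨?_, ?_⟩ le_rfl
    · positivity
    · have : ((κ⁻¹ : ℝ≥0) : ℝ) = (κ : ℝ)⁻¹ := by push_cast; ring
      rw [this]; exact hic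
  exact le_trans (by exact_mod_cast hcκ) hsup
end
end

section
/- Let f : ℝⁿ → ℝⁿ be a continuous mapping. Suppose that for every x ∈ ℝⁿ, f admits a strict first-order approximation A_x : ℝⁿ → ℝⁿ at x (i.e. A_x(x) = f(x) and lip(f − A_x, x) = 0) which is strongly regular around x, and that α := inf over x ∈ ℝⁿ of lop(A_x, x) satisfies α > 0. Then f is a bijection of ℝⁿ onto ℝⁿ, and f⁻¹ is Lipschitz continuous on ℝⁿ with constant α⁻¹. -/
open Metric Set
open scoped ENNReal NNReal

noncomputable section

variable {E F : Type*} [NormedAddCommGroup E] [NormedAddCommGroup F]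

section GIAux
variable {X : Type*} [NormedAddCommGroup X] [NormedSpace ℝ X]
open Filter

def GIL1 (f : X → X) (c : ℝ) (xb : X) : Prop :=
  ∃ δ > (0:ℝ), ∃ δ' > (0:ℝ), δ' ≤ δ ∧
    (∀ u ∈ closedBall xb δ, ∀ v ∈ closedBall xb δ, c * ‖u - v‖ ≤ ‖f u - f v‖) ∧
    ∃ r₀ > (0:ℝ), ∀ u ∈ closedBall xb δ', ∀ y ∈ closedBall (f u) r₀,
      ∃ v ∈ closedBall xb δ, f v = y

set_option maxHeartbeats 2000000 in
lemma gil_key [CompleteSpace X] (f g : X → X) (xb : X) (hf : Continuous f)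
    (c β ℓ : ℝ) (hc : 0 < c) (hcβ : c < β) (hℓ0 : 0 ≤ ℓ) (hℓ : ℓ < β - c)
    (hgx : g xb = f xb)
    (hlin : ∃ U ∈ nhds xb, ∃ V ∈ nhds (g xb), ∀ x ∈ U, ∀ r > (0:ℝ),
      ball (g x) (β * r) ∩ V ⊆ g '' ball x r)
    (hreg : ∃ V ∈ nhds (g xb), ∃ U ∈ nhds xb, ∀ y ∈ V, ∃ x : X, g ⁻¹' {y} ∩ U = {x})
    (hlip : ∃ W ∈ nhds xb, ∀ x₁ ∈ W, ∀ x₂ ∈ W,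
      ‖(f x₁ - g x₁) - (f x₂ - g x₂)‖ ≤ ℓ * ‖x₁ - x₂‖) :
    GIL1 f c xb := by
  classical
  obtain ⟨U, hU, V, hV, hopen⟩ := hlin
  obtain ⟨V₂, hV₂, U₂, hU₂, hsingle⟩ := hreg
  obtain ⟨W, hW, hWlip⟩ := hlip
  have hβ : 0 < β := hc.trans hcβ
  obtain ⟨δW, hδW, hδWsub⟩ := Metric.mem_nhds_iff.1 hW
  obtain ⟨δU, hδU, hδUsub⟩ := Metric.mem_nhds_iff.1 hU
  obtain ⟨δU₂, hδU₂, hδU₂sub⟩ := Metric.mem_nhds_iff.1 hU₂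
  obtain ⟨ρV, hρV, hρVsub⟩ := Metric.mem_nhds_iff.1 hV
  -- continuity of g at xb
  have hsubcont : ContinuousAt (fun x => f x - g x) xb := by
    rw [Metric.continuousAt_iff]
    intro ε hε
    refine ⟨min δW (ε / (ℓ + 1)), by positivity, fun {x} hx => ?_⟩
    have hx1 : x ∈ W := hδWsub (by
      simp only [mem_ball] at hx ⊢
      exact hx.trans_le (min_le_left _ _))
    have hx2 : dist x xb < ε / (ℓ + 1) := lt_of_lt_of_le hx (min_le_right _ _)
    have hxb : xb ∈ W := hδWsub (mem_ball_self hδW)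
    have h1 := hWlip x hx1 xb hxb
    rw [dist_eq_norm] at hx2 ⊢
    have h2 : ℓ * ‖x - xb‖ ≤ ℓ * (ε / (ℓ + 1)) :=
      mul_le_mul_of_nonneg_left hx2.le hℓ0
    have h3 : ℓ * (ε / (ℓ + 1)) < ε := by
      have hp : (0:ℝ) < ℓ + 1 := by linarith
      rw [mul_div_assoc', div_lt_iff₀ hp]
      nlinarith
    exact lt_of_le_of_lt (h1.trans h2) h3
  have hgcont : ContinuousAt g xb := by
    have : ContinuousAt (fun x => f x - (f x - g x)) xb :=
      hf.continuousAt.sub hsubcont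
    simpa using this
  obtain ⟨δg, hδg, hδgsub⟩ := Metric.mem_nhds_iff.1
    (hgcont.preimage_mem_nhds (Filter.inter_mem hV hV₂))
  -- the radius δ₁
  set δ₁ : ℝ := min (min (δW / 2) (δU / 2)) (min (δU₂ / 4) (δg / 2)) with hδ₁def
  have hδ₁ : 0 < δ₁ := by positivity
  have hδ₁W : closedBall xb δ₁ ⊆ W := fun x hx => hδWsub (by
    rw [mem_closedBall] at hx
    rw [mem_ball]
    have : δ₁ ≤ δW / 2 := (min_le_left _ _).trans (min_le_left _ _)
    linarith)
  have hδ₁U : closedBall xb δ₁ ⊆ U := fun x hx => hδUsub (by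
    rw [mem_closedBall] at hx
    rw [mem_ball]
    have : δ₁ ≤ δU / 2 := (min_le_left _ _).trans (min_le_right _ _)
    linarith)
  have hδ₁U₂ : closedBall xb (3 * δ₁) ⊆ U₂ := fun x hx => hδU₂sub (by
    rw [mem_closedBall] at hx
    rw [mem_ball]
    have : δ₁ ≤ δU₂ / 4 := (min_le_right _ _).trans (min_le_left _ _)
    linarith)
  have hδ₁V : ∀ x ∈ closedBall xb δ₁, g x ∈ V ∧ g x ∈ V₂ := fun x hx => by
    have : x ∈ ball xb δg := by
      rw [mem_closedBall] at hx
      rw [mem_ball]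
      have : δ₁ ≤ δg / 2 := (min_le_right _ _).trans (min_le_right _ _)
      linarith
    exact hδgsub this
  -- Step A : g is β-expansive on closedBall xb δ₁
  have hgexp : ∀ u ∈ closedBall xb δ₁, ∀ v ∈ closedBall xb δ₁,
      β * ‖u - v‖ ≤ ‖g u - g v‖ := by
    intro u hu v hv
    rcases eq_or_ne u v with rfl | huv
    · simp
    by_contra hlt
    push_neg at hlt
    have hr : 0 < ‖u - v‖ := by
      rw [norm_sub_pos_iff]; exact huv
    have hgv : g v ∈ ball (g u) (β * ‖u - v‖) ∩ V := by
      constructor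
      · rw [mem_ball, dist_eq_norm, ← norm_neg]
        simpa [neg_sub] using hlt
      · exact (hδ₁V v hv).1
    obtain ⟨w, hw, hgw⟩ := hopen u (hδ₁U hu) (‖u - v‖) hr hgv
    obtain ⟨x', hx'⟩ := hsingle (g v) (hδ₁V v hv).2
    have hv' : v ∈ g ⁻¹' {g v} ∩ U₂ := by
      refine ⟨rfl, hδ₁U₂ ?_⟩
      rw [mem_closedBall] at hv ⊢
      linarith
    have hw' : w ∈ g ⁻¹' {g v} ∩ U₂ := by
      refine ⟨hgw, hδ₁U₂ ?_⟩
      rw [mem_ball] at hw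
      rw [mem_closedBall]
      have h1 : dist w xb ≤ dist w u + dist u xb := dist_triangle _ _ _
      have h2 : dist u v ≤ dist u xb + dist xb v := dist_triangle _ _ _
      rw [mem_closedBall] at hu hv
      have h3 : dist w u < dist u v := by rw [dist_eq_norm u v]; exact hw
      have h4 : dist xb v = dist v xb := dist_comm _ _
      linarith
    rw [hx'] at hv' hw'
    rw [mem_singleton_iff] at hv' hw'
    have hwv : w = v := by rw [hw', hv']
    rw [hwv, mem_ball, dist_comm, dist_eq_norm] at hw
    exact lt_irrefl _ hw
  -- Step B : local inverse σ of g
  set ρ₁ : ℝ := min (β * δ₁ / 2) (ρV / 2) with hρ₁def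
  have hρ₁ : 0 < ρ₁ := by positivity
  have hσex : ∀ y ∈ closedBall (g xb) ρ₁, ∃ x ∈ ball xb δ₁, g x = y := by
    intro y hy
    refine hopen xb (hδ₁U (mem_closedBall_self hδ₁.le)) δ₁ hδ₁ ⟨?_, ?_⟩
    · rw [mem_ball]
      rw [mem_closedBall] at hy
      have h1 : ρ₁ ≤ β * δ₁ / 2 := min_le_left _ _
      nlinarith
    · refine hρVsub ?_
      rw [mem_ball]
      rw [mem_closedBall] at hy
      have h1 : ρ₁ ≤ ρV / 2 := min_le_right _ _
      linarith
  set σ : X → X := fun y => if h : ∃ x ∈ ball xb δ₁, g x = y then h.choose else xb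
    with hσdef
  have hσ1 : ∀ y ∈ closedBall (g xb) ρ₁, σ y ∈ ball xb δ₁ ∧ g (σ y) = y := by
    intro y hy
    have h := hσex y hy
    simp only [hσdef, dif_pos h]
    exact ⟨h.choose_spec.1, h.choose_spec.2⟩
  have hσxb : σ (g xb) = xb := by
    have h1 := hσ1 (g xb) (mem_closedBall_self hρ₁.le)
    have h2 := hgexp (σ (g xb)) (ball_subset_closedBall h1.1) xb
      (mem_closedBall_self hδ₁.le)
    rw [h1.2, sub_self, norm_zero] at h2
    have h3 : ‖σ (g xb) - xb‖ ≤ 0 := by nlinarith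
    have h4 : σ (g xb) - xb = 0 := by
      rw [← norm_le_zero_iff]; exact h3
    rw [sub_eq_zero] at h4; exact h4
  have hσlip : ∀ y ∈ closedBall (g xb) ρ₁, ∀ y' ∈ closedBall (g xb) ρ₁,
      β * ‖σ y - σ y'‖ ≤ ‖y - y'‖ := by
    intro y hy y' hy'
    have h1 := hσ1 y hy
    have h2 := hσ1 y' hy'
    have := hgexp (σ y) (ball_subset_closedBall h1.1) (σ y')
      (ball_subset_closedBall h2.1)
    rwa [h1.2, h2.2] at this
  -- Step C : solving f x = y near xb via the contraction principle
  set δ₂ : ℝ := min (δ₁ / 2) (ρ₁ / (2 * (ℓ + 1))) with hδ₂def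
  have hδ₂ : 0 < δ₂ := by positivity
  have hδ₂δ₁ : δ₂ ≤ δ₁ := by
    have h := min_le_left (δ₁ / 2) (ρ₁ / (2 * (ℓ + 1)))
    have : δ₂ ≤ δ₁ / 2 := h
    linarith
  have hβℓ : 0 < β - ℓ := by linarith
  set ρ : ℝ := min ((β - ℓ) * δ₂ / 2) (ρ₁ / 2) with hρdef
  have hρ : 0 < ρ := by positivity
  have hℓδ₂ : ℓ * δ₂ ≤ ρ₁ / 2 := by
    have h1 : δ₂ ≤ ρ₁ / (2 * (ℓ + 1)) := min_le_right _ _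
    have h2 : ℓ * δ₂ ≤ ℓ * (ρ₁ / (2 * (ℓ + 1))) := mul_le_mul_of_nonneg_left h1 hℓ0
    have h3 : ℓ * (ρ₁ / (2 * (ℓ + 1))) ≤ ρ₁ / 2 := by
      rw [mul_div_assoc', div_le_div_iff₀ (by positivity) (by norm_num)]
      nlinarith
    linarith
  have hρρ₁ : ρ + ℓ * δ₂ ≤ ρ₁ := by
    have h4 : ρ ≤ ρ₁ / 2 := min_le_right _ _
    linarith
  have hC : ∀ y ∈ closedBall (f xb) ρ, ∃ x ∈ closedBall xb δ₂, f x = y := by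
    intro y hy
    rw [mem_closedBall, dist_eq_norm] at hy
    set T : X → X := fun x => σ (y - (f x - g x)) with hTdef
    have harg : ∀ x ∈ closedBall xb δ₂,
        ‖(y - (f x - g x)) - g xb‖ ≤ ρ + ℓ * δ₂ := by
      intro x hx
      have hxW : x ∈ W := hδ₁W (closedBall_subset_closedBall hδ₂δ₁ hx)
      have hxbW : xb ∈ W := hδ₁W (mem_closedBall_self hδ₁.le)
      have h1 := hWlip x hxW xb hxbW
      have heq : y - (f x - g x) - g xb
          = (y - f xb) - ((f x - g x) - (f xb - g xb)) := by
        rw [hgx]; abel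
      rw [heq]
      have h2 := norm_sub_le (y - f xb) ((f x - g x) - (f xb - g xb))
      rw [mem_closedBall, dist_eq_norm] at hx
      have h3 : ℓ * ‖x - xb‖ ≤ ℓ * δ₂ := mul_le_mul_of_nonneg_left hx hℓ0
      linarith
    have hargmem : ∀ x ∈ closedBall xb δ₂,
        y - (f x - g x) ∈ closedBall (g xb) ρ₁ := by
      intro x hx
      rw [mem_closedBall, dist_eq_norm]
      exact (harg x hx).trans hρρ₁
    have hTmaps : MapsTo T (closedBall xb δ₂) (closedBall xb δ₂) := by
      intro x hx
      rw [mem_closedBall, dist_eq_norm]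
      have h1 := hσlip _ (hargmem x hx) _ (mem_closedBall_self hρ₁.le)
      rw [hσxb] at h1
      have h1' : β * ‖T x - xb‖ ≤ ‖(y - (f x - g x)) - g xb‖ := h1
      have h2 := harg x hx
      have h5 : ρ ≤ (β - ℓ) * δ₂ / 2 := min_le_left _ _
      have h6 : 0 ≤ (β - ℓ) * δ₂ := mul_nonneg hβℓ.le hδ₂.le
      have h7 : 0 ≤ ℓ * δ₂ := mul_nonneg hℓ0 hδ₂.le
      have hb : β * ‖T x - xb‖ ≤ β * δ₂ := by nlinarith
      exact le_of_mul_le_mul_left hb hβ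
    have hq1 : (Real.toNNReal (ℓ / β) : ℝ) = ℓ / β :=
      Real.coe_toNNReal _ (by positivity)
    have hTlip : LipschitzOnWith (Real.toNNReal (ℓ / β)) T (closedBall xb δ₂) := by
      rw [lipschitzOnWith_iff_dist_le_mul]
      intro x hx x' hx'
      rw [dist_eq_norm, dist_eq_norm, hq1]
      have h1 := hσlip _ (hargmem x hx) _ (hargmem x' hx')
      have heq : (y - (f x - g x)) - (y - (f x' - g x'))
          = (f x' - g x') - (f x - g x) := by abel
      rw [heq] at h1
      have h1' : β * ‖T x - T x'‖ ≤ ‖(f x' - g x') - (f x - g x)‖ := h1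
      have h2 := hWlip x' (hδ₁W (closedBall_subset_closedBall hδ₂δ₁ hx'))
        x (hδ₁W (closedBall_subset_closedBall hδ₂δ₁ hx))
      have h3 : ‖x' - x‖ = ‖x - x'‖ := norm_sub_rev _ _
      rw [h3] at h2
      rw [div_mul_eq_mul_div, le_div_iff₀ hβ]
      have h8 : β * ‖T x - T x'‖ ≤ ℓ * ‖x - x'‖ := h1'.trans h2
      linarith
    have hcontr : ContractingWith (Real.toNNReal (ℓ / β))
        (hTmaps.restrict T _ _) := by
      constructor
      · rw [← NNReal.coe_lt_coe, hq1, NNReal.coe_one, div_lt_one hβ]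
        linarith
      · exact hTlip.mapsToRestrict hTmaps
    obtain ⟨x, hxmem, hfix, -, -⟩ := hcontr.exists_fixedPoint'
      Metric.isClosed_closedBall.isComplete hTmaps (mem_closedBall_self hδ₂.le)
      (edist_ne_top _ _)
    refine ⟨x, hxmem, ?_⟩
    have h1 := (hσ1 _ (hargmem x hxmem)).2
    have h2 : g x = y - (f x - g x) := by
      conv_lhs => rw [← hfix]
      exact h1
    rw [eq_sub_iff_add_eq] at h2
    have h3 : f x = g x + (f x - g x) := by abel
    rw [h3, h2]
  -- Step D : f is c-expansive on closedBall xb δ₁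
  have hfexp : ∀ u ∈ closedBall xb δ₁, ∀ v ∈ closedBall xb δ₁,
      c * ‖u - v‖ ≤ ‖f u - f v‖ := by
    intro u hu v hv
    have h1 := hgexp u hu v hv
    have h2 := hWlip u (hδ₁W hu) v (hδ₁W hv)
    have h3 : ‖g u - g v‖ - ‖(g u - g v) - (f u - f v)‖ ≤ ‖f u - f v‖ := by
      have h := norm_sub_norm_le (g u - g v) ((g u - g v) - (f u - f v))
      have heq : (g u - g v) - ((g u - g v) - (f u - f v)) = f u - f v := by abel
      rwa [heq] at h
    have h4 : ‖(g u - g v) - (f u - f v)‖ = ‖(f u - g u) - (f v - g v)‖ := by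
      rw [← norm_neg]; congr 1; abel
    rw [h4] at h3
    have h5 : 0 ≤ (β - ℓ - c) * ‖u - v‖ :=
      mul_nonneg (by linarith) (norm_nonneg _)
    nlinarith
  -- final packaging
  obtain ⟨δ₄, hδ₄, hδ₄sub⟩ : ∃ δ₄ > (0:ℝ), ∀ u, ‖u - xb‖ ≤ δ₄ → ‖f u - f xb‖ ≤ ρ / 2 := by
    obtain ⟨d, hd, hsub⟩ := Metric.continuousAt_iff.1 hf.continuousAt (ρ/2) (by positivity)
    refine ⟨d/2, by positivity, fun u hu => ?_⟩
    have h := hsub (show dist u xb < d by rw [dist_eq_norm]; linarith)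
    rw [dist_eq_norm] at h; linarith
  refine ⟨δ₁, hδ₁, min δ₄ δ₂, by positivity,
    (min_le_right _ _).trans hδ₂δ₁, hfexp, ρ/2, by positivity, ?_⟩
  intro u hu y hy
  have hyb : y ∈ closedBall (f xb) ρ := by
    rw [mem_closedBall] at hu hy ⊢
    have h1 : ‖f u - f xb‖ ≤ ρ/2 := by
      apply hδ₄sub
      rw [dist_eq_norm] at hu
      exact hu.trans (min_le_left _ _)
    have h2 : dist y (f xb) ≤ dist y (f u) + dist (f u) (f xb) := dist_triangle _ _ _
    rw [dist_eq_norm (f u) (f xb)] at h2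
    linarith
  obtain ⟨v, hv, hfv⟩ := hC y hyb
  exact ⟨v, closedBall_subset_closedBall hδ₂δ₁ hv, hfv⟩
lemma gil_unif (f : X → X) (c : ℝ) (hc : 0 < c) {K : Set X} (hK : IsCompact K)
    (h : ∀ x, GIL1 f c x) :
    ∃ δ₀ > (0:ℝ), ∃ ρ > (0:ℝ),
      (∀ u ∈ K, ∀ v : X, ‖v - u‖ ≤ δ₀ → c * ‖u - v‖ ≤ ‖f u - f v‖) ∧
      (∀ u ∈ K, ∀ y : X, ‖y - f u‖ ≤ ρ → ∃ v : X, f v = y ∧ c * ‖v - u‖ ≤ ‖y - f u‖) := by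
  classical
  choose δ hδ δ' hδ' hle hexp r₀ hr₀ hsurj using h
  obtain ⟨t, htK, htcov⟩ := hK.elim_nhds_subcover (fun x => ball x (δ' x / 2))
    (fun x _ => ball_mem_nhds x (half_pos (hδ' x)))
  rcases t.eq_empty_or_nonempty with rfl | hte
  · refine ⟨1, one_pos, 1, one_pos, ?_, ?_⟩ <;> intro u hu <;>
      · exfalso; simpa using htcov hu
  set δ₀ : ℝ := t.inf' hte (fun x => δ' x / 2) with hδ₀def
  have hδ₀pos : 0 < δ₀ := by
    rw [hδ₀def, Finset.lt_inf'_iff]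
    intro i _; exact half_pos (hδ' i)
  have hδ₀le : ∀ i ∈ t, δ₀ ≤ δ' i / 2 := fun i hi => Finset.inf'_le _ hi
  set ρ : ℝ := t.inf' hte r₀ with hρdef
  have hρpos : 0 < ρ := by
    rw [hρdef, Finset.lt_inf'_iff]
    intro i _; exact hr₀ i
  have hρle : ∀ i ∈ t, ρ ≤ r₀ i := fun i hi => Finset.inf'_le _ hi
  have hmem : ∀ u ∈ K, ∃ i ∈ t, u ∈ ball i (δ' i / 2) := by
    intro u hu
    have := htcov hu
    simpa using this
  refine ⟨δ₀, hδ₀pos, ρ, hρpos, ?_, ?_⟩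
  · intro u hu v hv
    obtain ⟨i, hit, hui⟩ := hmem u hu
    rw [mem_ball] at hui
    have hu' : u ∈ closedBall i (δ i) := by
      rw [mem_closedBall]
      have h1 := hδ' i; have h2 := hle i
      linarith
    have hv' : v ∈ closedBall i (δ i) := by
      rw [mem_closedBall]
      have h1 : dist v i ≤ dist v u + dist u i := dist_triangle _ _ _
      have h2 : dist v u ≤ δ₀ := by rw [dist_eq_norm]; exact hv
      have h3 := hδ₀le i hit
      have h4 := hle i
      linarith
    exact hexp i u hu' v hv'
  · intro u hu y hy
    obtain ⟨i, hit, hui⟩ := hmem u hu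
    rw [mem_ball] at hui
    have hu' : u ∈ closedBall i (δ' i) := by
      rw [mem_closedBall]
      have h1 := hδ' i
      linarith
    have hy' : y ∈ closedBall (f u) (r₀ i) := by
      rw [mem_closedBall, dist_eq_norm]
      exact hy.trans (hρle i hit)
    obtain ⟨v, hv, hfv⟩ := hsurj i u hu' y hy'
    refine ⟨v, hfv, ?_⟩
    have := hexp i v hv u (closedBall_subset_closedBall (hle i) hu')
    rw [hfv] at this
    exact this
set_option maxHeartbeats 1000000 in
lemma gil_surj [ProperSpace X] (f : X → X) (hf : Continuous f) (c : ℝ) (hc : 0 < c)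
    (h : ∀ x, GIL1 f c x) : Function.Surjective f := by
  intro y
  set x₀ : X := 0 with hx₀def
  rcases eq_or_ne (f x₀) y with heq | hne
  · exact ⟨x₀, heq⟩
  set M : ℝ := ‖y - f x₀‖ with hMdef
  have hM0 : 0 < M := by
    rw [hMdef, norm_sub_pos_iff]
    exact Ne.symm hne
  set w : ℝ → X := fun t => f x₀ + t • (y - f x₀) with hwdef
  have hwcont : Continuous w := by
    exact continuous_const.add (continuous_id.smul continuous_const)
  set S : Set ℝ := {t | t ∈ Icc (0:ℝ) 1 ∧ ∃ x, f x = w t ∧ c * ‖x - x₀‖ ≤ t * M}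
    with hSdef
  have hS0 : (0:ℝ) ∈ S := by
    refine ⟨⟨le_refl 0, zero_le_one⟩, x₀, ?_, by simp⟩
    simp [hwdef]
  have hSbdd : BddAbove S := ⟨1, fun t ht => ht.1.2⟩
  have hSne : S.Nonempty := ⟨0, hS0⟩
  set τ : ℝ := sSup S with hτdef
  have hτIcc : τ ∈ Icc (0:ℝ) 1 :=
    ⟨le_csSup hSbdd hS0, csSup_le hSne fun t ht => ht.1.2⟩
  obtain ⟨u, humono, hutend, huS⟩ := exists_seq_tendsto_sSup hSne hSbdd
  choose xs hxs1 hxs2 using fun n => (huS n).2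
  have hbound : ∀ n, xs n ∈ closedBall x₀ (M / c) := by
    intro n
    rw [mem_closedBall, dist_eq_norm, le_div_iff₀ hc]
    have h1 := hxs2 n
    have h2 : u n ≤ 1 := (huS n).1.2
    nlinarith [norm_nonneg (xs n - x₀)]
  obtain ⟨xh, -, φ, hφmono, hφtend⟩ :=
    (isCompact_closedBall x₀ (M/c)).tendsto_subseq hbound
  have hutend' : Tendsto (fun n => u (φ n)) atTop (nhds τ) :=
    hutend.comp hφmono.tendsto_atTop
  have hfxh : f xh = w τ := by
    have h1 : Tendsto (fun n => f (xs (φ n))) atTop (nhds (f xh)) :=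
      (hf.tendsto _).comp hφtend
    have h2 : Tendsto (fun n => w (u (φ n))) atTop (nhds (w τ)) :=
      (hwcont.tendsto _).comp hutend'
    have heq : (fun n => f (xs (φ n))) = fun n => w (u (φ n)) :=
      funext fun n => hxs1 (φ n)
    rw [heq] at h1
    exact tendsto_nhds_unique h1 h2
  have hτb : c * ‖xh - x₀‖ ≤ τ * M := by
    have h1 : Tendsto (fun n => c * ‖xs (φ n) - x₀‖) atTop (nhds (c * ‖xh - x₀‖)) :=
      ((continuous_const.mul ((continuous_id.sub continuous_const).norm)).tendsto _).comp
        hφtend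
    have h2 : Tendsto (fun n => u (φ n) * M) atTop (nhds (τ * M)) :=
      ((continuous_id.mul continuous_const).tendsto _).comp hutend'
    exact le_of_tendsto_of_tendsto' h1 h2 fun n => hxs2 (φ n)
  have hτS : τ ∈ S := ⟨hτIcc, xh, hfxh, hτb⟩
  rcases eq_or_lt_of_le hτIcc.2 with hτ1 | hτlt
  · refine ⟨xh, ?_⟩
    rw [hfxh, hτ1]
    simp [hwdef]
  · obtain ⟨δ, hδ, δ', hδ', hled, hexp, r₀, hr₀, hsurj⟩ := h xh
    set t : ℝ := min 1 (τ + r₀ / M) with htdef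
    have htτ : τ < t := lt_min hτlt (by have := div_pos hr₀ hM0; linarith)
    have htI : t ∈ Icc (0:ℝ) 1 := ⟨hτIcc.1.trans htτ.le, min_le_left _ _⟩
    have hwdiff : ∀ s s' : ℝ, w s - w s' = (s - s') • (y - f x₀) := by
      intro s s'
      simp only [hwdef]
      rw [add_sub_add_left_eq_sub, ← sub_smul]
    have hyt : w t ∈ closedBall (f xh) r₀ := by
      rw [mem_closedBall, dist_eq_norm, hfxh, hwdiff, norm_smul,
        Real.norm_eq_abs, abs_of_nonneg (by linarith)]
      have h1 : t - τ ≤ r₀ / M := by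
        have := min_le_right 1 (τ + r₀ / M)
        linarith [this.trans_eq rfl, htdef ▸ min_le_right 1 (τ + r₀ / M)]
      calc (t - τ) * M ≤ (r₀ / M) * M := by nlinarith
        _ = r₀ := by field_simp
    obtain ⟨v, hv, hfv⟩ := hsurj xh (mem_closedBall_self hδ'.le) (w t) hyt
    have hvb : c * ‖v - xh‖ ≤ (t - τ) * M := by
      have h1 := hexp v hv xh (mem_closedBall_self hδ.le)
      rw [hfv, hfxh, hwdiff, norm_smul, Real.norm_eq_abs,
        abs_of_nonneg (by linarith)] at h1
      exact h1
    have htS : t ∈ S := by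
      refine ⟨htI, v, hfv, ?_⟩
      have h1 : ‖v - x₀‖ ≤ ‖v - xh‖ + ‖xh - x₀‖ := by
        have := dist_triangle v xh x₀
        simpa [dist_eq_norm] using this
      nlinarith
    exact absurd (le_csSup hSbdd htS) (not_le.2 htτ)
set_option maxHeartbeats 1000000 in
lemma gil_lip (f : X → X) (c : ℝ) (hc : 0 < c) (h : ∀ x, GIL1 f c x)
    (hinj : Function.Injective f) (g : X → X) (hgf : ∀ y, f (g y) = y) :
    ∀ y₁ y₂, c * ‖g y₁ - g y₂‖ ≤ ‖y₁ - y₂‖ := by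
  have hloc : ∀ y : X, ∃ ε > (0:ℝ), ∀ y₁ ∈ closedBall y ε, ∀ y₂ ∈ closedBall y ε,
      c * ‖g y₁ - g y₂‖ ≤ ‖y₁ - y₂‖ := by
    intro y
    obtain ⟨δ, hδ, δ', hδ', hled, hexp, r₀, hr₀, hsurj⟩ := h (g y)
    refine ⟨r₀, hr₀, ?_⟩
    have key : ∀ z ∈ closedBall y r₀, g z ∈ closedBall (g y) δ := by
      intro z hz
      have hz' : z ∈ closedBall (f (g y)) r₀ := by rwa [hgf]
      obtain ⟨v, hv, hfv⟩ := hsurj (g y) (mem_closedBall_self hδ'.le) z hz'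
      have hveq : v = g z := hinj (by rw [hfv, hgf])
      rwa [← hveq]
    intro y₁ hy₁ y₂ hy₂
    have h1 := hexp (g y₁) (key y₁ hy₁) (g y₂) (key y₂ hy₂)
    rwa [hgf, hgf] at h1
  have hgcont : Continuous g := by
    rw [Metric.continuous_iff]
    intro b ε hε
    obtain ⟨ε', hε', hlc⟩ := hloc b
    refine ⟨min ε' (c * ε / 2), by positivity, fun a ha => ?_⟩
    have ha1 : a ∈ closedBall b ε' := by
      rw [mem_closedBall]
      exact (ha.trans_le (min_le_left _ _)).le
    have h1 := hlc a ha1 b (mem_closedBall_self hε'.le)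
    rw [dist_eq_norm] at ha ⊢
    have h2 : ‖a - b‖ < c * ε / 2 := ha.trans_le (min_le_right _ _)
    nlinarith
  intro y₁ y₂
  rcases eq_or_ne y₁ y₂ with rfl | hne
  · simp
  set M : ℝ := ‖y₂ - y₁‖ with hMdef
  have hM0 : 0 < M := by rw [hMdef, norm_sub_pos_iff]; exact Ne.symm hne
  set w : ℝ → X := fun t => y₁ + t • (y₂ - y₁) with hwdef
  have hwcont : Continuous w := continuous_const.add (continuous_id.smul continuous_const)
  have hwdiff : ∀ s s' : ℝ, w s - w s' = (s - s') • (y₂ - y₁) := by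
    intro s s'
    simp only [hwdef]
    rw [add_sub_add_left_eq_sub, ← sub_smul]
  set S : Set ℝ := {t | t ∈ Icc (0:ℝ) 1 ∧ c * ‖g (w t) - g y₁‖ ≤ t * M} with hSdef
  have hS0 : (0:ℝ) ∈ S := by
    refine ⟨⟨le_refl 0, zero_le_one⟩, ?_⟩
    have : w 0 = y₁ := by simp [hwdef]
    rw [this]
    simp
  have hSbdd : BddAbove S := ⟨1, fun t ht => ht.1.2⟩
  have hSne : S.Nonempty := ⟨0, hS0⟩
  have hSclosed : IsClosed S := by
    have h1 : IsClosed {t : ℝ | c * ‖g (w t) - g y₁‖ ≤ t * M} :=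
      isClosed_le (by fun_prop) (by fun_prop)
    exact isClosed_Icc.inter h1
  set τ : ℝ := sSup S with hτdef
  have hτS : τ ∈ S := hSclosed.csSup_mem hSne hSbdd
  rcases eq_or_lt_of_le hτS.1.2 with hτ1 | hτlt
  · have h1 := hτS.2
    rw [hτ1] at h1
    have hw1 : w 1 = y₂ := by simp [hwdef]
    rw [hw1, one_mul] at h1
    calc c * ‖g y₁ - g y₂‖ = c * ‖g y₂ - g y₁‖ := by rw [norm_sub_rev]
      _ ≤ M := h1
      _ = ‖y₁ - y₂‖ := by rw [hMdef, norm_sub_rev]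
  · obtain ⟨ε, hε, hlc⟩ := hloc (w τ)
    set t : ℝ := min 1 (τ + ε / M) with htdef
    have htτ : τ < t := lt_min hτlt (by have := div_pos hε hM0; linarith)
    have htI : t ∈ Icc (0:ℝ) 1 := ⟨hτS.1.1.trans htτ.le, min_le_left _ _⟩
    have htb : (t - τ) * M ≤ ε := by
      have h1 : t - τ ≤ ε / M := by
        have := min_le_right 1 (τ + ε / M)
        have h2 : t ≤ τ + ε / M := min_le_right _ _
        linarith
      calc (t - τ) * M ≤ (ε / M) * M := by nlinarith
        _ = ε := by field_simp
    have hwt : w t ∈ closedBall (w τ) ε := by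
      rw [mem_closedBall, dist_eq_norm, hwdiff, norm_smul, Real.norm_eq_abs,
        abs_of_nonneg (by linarith)]
      exact htb
    have h1 := hlc (w t) hwt (w τ) (mem_closedBall_self hε.le)
    have h2 : ‖w t - w τ‖ = (t - τ) * M := by
      rw [hwdiff, norm_smul, Real.norm_eq_abs, abs_of_nonneg (by linarith)]
    rw [h2] at h1
    have h3 : c * ‖g (w t) - g y₁‖ ≤ t * M := by
      have h4 : ‖g (w t) - g y₁‖ ≤ ‖g (w t) - g (w τ)‖ + ‖g (w τ) - g y₁‖ := by
        have := dist_triangle (g (w t)) (g (w τ)) (g y₁)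
        simpa [dist_eq_norm] using this
      have h5 := hτS.2
      nlinarith
    have htS : t ∈ S := ⟨htI, h3⟩
    exact absurd (le_csSup hSbdd htS) (not_le.2 htτ)
set_option maxHeartbeats 4000000 in
lemma gil_inj [ProperSpace X] (f : X → X) (hf : Continuous f) (c : ℝ) (hc : 0 < c)
    (h : ∀ x, GIL1 f c x) : Function.Injective f := by
  classical
  intro a b hab
  set y₀ : X := f a with hy₀def
  set γ : ℝ → X := fun t => a + t • (b - a) with hγdef
  have hγcont : Continuous γ := continuous_const.add (continuous_id.smul continuous_const)
  set p : ℝ → X := fun t => f (γ t) with hpdef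
  have hpcont : Continuous p := hf.comp hγcont
  have hγ0 : γ 0 = a := by simp [hγdef]
  have hγ1 : γ 1 = b := by simp [hγdef]
  have hp0 : p 0 = y₀ := by rw [hpdef]; simp only [hγ0, hy₀def]
  have hp1 : p 1 = y₀ := by rw [hpdef]; simp only [hγ1, hy₀def]; exact hab.symm
  obtain ⟨C₀, hC₀⟩ := (isCompact_Icc (a := (0:ℝ)) (b := 1)).exists_bound_of_continuousOn
      ((hpcont.sub continuous_const).continuousOn (s := Icc 0 1))
  set C : ℝ := max C₀ 0 with hCdef
  have hC : ∀ t ∈ Icc (0:ℝ) 1, ‖p t - y₀‖ ≤ C := fun t ht =>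
    (hC₀ t ht).trans (le_max_left _ _)
  have hC0 : 0 ≤ C := le_max_right _ _
  obtain ⟨δ₀, hδ₀, ρ, hρ, hUi, hUii⟩ :=
    gil_unif f c hc (isCompact_closedBall a (C / c)) h
  set m : ℝ := min ρ (c * δ₀ / 4) with hmdef
  have hm : 0 < m := lt_min hρ (by positivity)
  obtain ⟨N₀, hN₀⟩ := exists_nat_gt (C / m)
  set N : ℕ := N₀ + 1 with hNdef
  have hNpos : 0 < (N:ℝ) := by positivity
  have hCN : C / N ≤ m := by
    have h1 : C / m < N := by
      have h2 : (N₀ : ℝ) ≤ N := by rw [hNdef]; push_cast; linarith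
      linarith
    rw [div_le_iff₀ hNpos]
    rw [div_lt_iff₀ hm] at h1
    nlinarith
  have hKmem : ∀ x : X, c * ‖x - a‖ ≤ C → x ∈ closedBall a (C / c) := by
    intro x hx
    rw [mem_closedBall, dist_eq_norm, le_div_iff₀ hc]
    nlinarith
  have main : ∀ k : ℕ, (k:ℝ) ≤ N → ∃ L : ℝ → X,
      (∀ t ∈ Icc (0:ℝ) 1, f (L t) = y₀ + ((k:ℝ)/(N:ℝ)) • (p t - y₀)) ∧
      (∀ t ∈ Icc (0:ℝ) 1, c * ‖L t - a‖ ≤ ((k:ℝ)/(N:ℝ)) * C) ∧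
      (∀ t ∈ Icc (0:ℝ) 1, ∀ t' ∈ Icc (0:ℝ) 1, ‖p t - p t'‖ ≤ c * δ₀ / 2 →
        c * ‖L t - L t'‖ ≤ ‖p t - p t'‖) ∧ L 0 = a ∧ L 1 = a := by
    intro k
    induction k with
    | zero =>
      intro _
      refine ⟨fun _ => a, ?_, ?_, ?_, rfl, rfl⟩
      · intro t ht; simp [hy₀def]
      · intro t ht; simp
      · intro t ht t' ht' hsm
        simpa using norm_nonneg (p t - p t')
    | succ k ih =>
      intro hk1
      have hk1' : (k:ℝ) + 1 ≤ N := by exact_mod_cast hk1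
      obtain ⟨L, hP1, hP2, hP3, hL0, hL1⟩ := ih (by linarith)
      have hkN : (k:ℝ)/(N:ℝ) ≤ 1 := by rw [div_le_one hNpos]; linarith
      have hk1N : ((k:ℝ)+1)/(N:ℝ) ≤ 1 := by rw [div_le_one hNpos]; linarith
      have hk1N0 : 0 ≤ ((k:ℝ)+1)/(N:ℝ) := by positivity
      have hkN0 : 0 ≤ (k:ℝ)/(N:ℝ) := by positivity
      have hstep : ∀ t, t ∈ Icc (0:ℝ) 1 → ∃ w : X,
          f w = y₀ + (((k:ℝ)+1)/(N:ℝ)) • (p t - y₀) ∧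
          c * ‖w - L t‖ ≤ (1/(N:ℝ)) * ‖p t - y₀‖ := by
        intro t ht
        have hLK : L t ∈ closedBall a (C / c) := by
          apply hKmem
          have h1 := hP2 t ht
          have h2 : ((k:ℝ)/(N:ℝ)) * C ≤ C := by nlinarith
          linarith
        have hdiff : (y₀ + (((k:ℝ)+1)/(N:ℝ)) • (p t - y₀)) - f (L t)
            = (1/(N:ℝ)) • (p t - y₀) := by
          rw [hP1 t ht, add_sub_add_left_eq_sub, ← sub_smul]
          congr 1
          field_simp
          ring
        have hdnorm : ‖(y₀ + (((k:ℝ)+1)/(N:ℝ)) • (p t - y₀)) - f (L t)‖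
            = (1/(N:ℝ)) * ‖p t - y₀‖ := by
          rw [hdiff, norm_smul, Real.norm_eq_abs, abs_of_nonneg (by positivity)]
        have hdle : ‖(y₀ + (((k:ℝ)+1)/(N:ℝ)) • (p t - y₀)) - f (L t)‖ ≤ ρ := by
          rw [hdnorm]
          have h1 := hC t ht
          have h2 : (1/(N:ℝ)) * ‖p t - y₀‖ ≤ (1/(N:ℝ)) * C :=
            mul_le_mul_of_nonneg_left h1 (by positivity)
          have h3 : (1/(N:ℝ)) * C = C / N := by ring
          have h4 : C / N ≤ ρ := hCN.trans (min_le_left _ _)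
          linarith
        obtain ⟨w, hw1, hw2⟩ := hUii (L t) hLK _ hdle
        exact ⟨w, hw1, by rwa [hdnorm] at hw2⟩
      choose! v hv1 hv2 using hstep
      have hvincr : ∀ t ∈ Icc (0:ℝ) 1, c * ‖v t - L t‖ ≤ C / N := by
        intro t ht
        have h1 := hv2 t ht
        have h2 := hC t ht
        have h3 : (1/(N:ℝ)) * ‖p t - y₀‖ ≤ (1/(N:ℝ)) * C :=
          mul_le_mul_of_nonneg_left h2 (by positivity)
        have h4 : (1/(N:ℝ)) * C = C / N := by ring
        linarith
      have hvP2 : ∀ t ∈ Icc (0:ℝ) 1, c * ‖v t - a‖ ≤ (((k:ℝ)+1)/(N:ℝ)) * C := by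
        intro t ht
        have h1 := hvincr t ht
        have h2 := hP2 t ht
        have h3 : ‖v t - a‖ ≤ ‖v t - L t‖ + ‖L t - a‖ := by
          have hd := dist_triangle (v t) (L t) a
          simpa [dist_eq_norm] using hd
        have h4 : c * ‖v t - a‖ ≤ c * ‖v t - L t‖ + c * ‖L t - a‖ := by nlinarith
        have h5 : (((k:ℝ)+1)/(N:ℝ)) * C = C/N + ((k:ℝ)/(N:ℝ))*C := by
          field_simp
          ring
        linarith
      refine ⟨v, ?_, ?_, ?_, ?_, ?_⟩
      · intro t ht; rw [Nat.cast_add, Nat.cast_one]; exact hv1 t ht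
      · intro t ht; rw [Nat.cast_add, Nat.cast_one]; exact hvP2 t ht
      · intro t ht t' ht' hsm
        have hvtK : v t ∈ closedBall a (C / c) := hKmem _ (by
          have h1 := hvP2 t ht
          nlinarith)
        have ht1 : ‖v t' - v t‖ ≤ ‖v t' - L t'‖ + ‖L t' - L t‖ + ‖L t - v t‖ := by
          have hd := dist_triangle4 (v t') (L t') (L t) (v t)
          simpa [dist_eq_norm] using hd
        have e1 : c * ‖v t' - L t'‖ ≤ C / N := hvincr t' ht'
        have e2 : c * ‖L t - v t‖ ≤ C / N := by
          rw [norm_sub_rev]; exact hvincr t ht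
        have e3 : c * ‖L t' - L t‖ ≤ c * δ₀ / 2 := by
          rw [norm_sub_rev]
          exact (hP3 t ht t' ht' hsm).trans hsm
        have hCNm : C / N ≤ c * δ₀ / 4 := hCN.trans (min_le_right _ _)
        have hmul := mul_le_mul_of_nonneg_left ht1 hc.le
        rw [mul_add, mul_add] at hmul
        have hfin : c * ‖v t' - v t‖ ≤ c * δ₀ := by linarith
        have h1 : ‖v t' - v t‖ ≤ δ₀ := le_of_mul_le_mul_left hfin hc
        have h2 := hUi (v t) hvtK (v t') h1
        have h3 : f (v t) - f (v t') = (((k:ℝ)+1)/(N:ℝ)) • (p t - p t') := by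
          rw [hv1 t ht, hv1 t' ht', add_sub_add_left_eq_sub, ← smul_sub]
          congr 1
          abel
        rw [h3, norm_smul, Real.norm_eq_abs, abs_of_nonneg hk1N0] at h2
        have h4 : (((k:ℝ)+1)/(N:ℝ)) * ‖p t - p t'‖ ≤ ‖p t - p t'‖ := by
          nlinarith [norm_nonneg (p t - p t')]
        linarith
      · have h1 := hv2 0 (left_mem_Icc.2 zero_le_one)
        rw [hp0, sub_self, norm_zero, mul_zero] at h1
        have h2 : ‖v 0 - L 0‖ ≤ 0 := by nlinarith
        have h3 : v 0 = L 0 := by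
          rw [← sub_eq_zero, ← norm_le_zero_iff]
          exact h2
        rw [h3, hL0]
      · have h1 := hv2 1 (right_mem_Icc.2 zero_le_one)
        rw [hp1, sub_self, norm_zero, mul_zero] at h1
        have h2 : ‖v 1 - L 1‖ ≤ 0 := by nlinarith
        have h3 : v 1 = L 1 := by
          rw [← sub_eq_zero, ← norm_le_zero_iff]
          exact h2
        rw [h3, hL1]
  obtain ⟨L, hP1, -, hP3, hL0, hL1⟩ := main N (le_refl _)
  have hNN : ((N:ℝ))/(N:ℝ) = 1 := div_self hNpos.ne'
  have hP1' : ∀ t ∈ Icc (0:ℝ) 1, f (L t) = p t := by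
    intro t ht
    rw [hP1 t ht, hNN, one_smul]
    abel
  have hLcont : ContinuousOn L (Icc (0:ℝ) 1) := by
    rw [Metric.continuousOn_iff]
    intro t₀ ht₀ ε hε
    obtain ⟨η, hη, hpc'⟩ := Metric.continuousAt_iff.1
      (hpcont.continuousAt (x := t₀)) (min (c * δ₀ / 2) (c * ε / 2)) (by positivity)
    refine ⟨η, hη, fun t ht hd => ?_⟩
    have h1 := hpc' hd
    rw [dist_eq_norm] at h1
    have h2 := hP3 t ht t₀ ht₀ (h1.trans_le (min_le_left _ _)).le
    rw [dist_eq_norm]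
    have h3 : ‖p t - p t₀‖ < c * ε / 2 := h1.trans_le (min_le_right _ _)
    nlinarith
  set S : Set ℝ := {t | t ∈ Icc (0:ℝ) 1 ∧ L t = γ t} with hSdef
  have hS0 : (0:ℝ) ∈ S := ⟨left_mem_Icc.2 zero_le_one, by rw [hL0, hγ0]⟩
  have hSne : S.Nonempty := ⟨0, hS0⟩
  have hSbdd : BddAbove S := ⟨1, fun t ht => ht.1.2⟩
  have hSclosed : IsClosed S := by
    have heq : S = Icc (0:ℝ) 1 ∩ (fun t => L t - γ t) ⁻¹' {0} := by
      ext t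
      simp [hSdef, sub_eq_zero]
    rw [heq]
    exact (hLcont.sub hγcont.continuousOn).preimage_isClosed_of_isClosed
      isClosed_Icc isClosed_singleton
  set τ : ℝ := sSup S with hτdef
  have hτS : τ ∈ S := hSclosed.csSup_mem hSne hSbdd
  rcases eq_or_lt_of_le hτS.1.2 with hτ1 | hτlt
  · have h1 := hτS.2
    rw [hτ1, hL1, hγ1] at h1
    exact h1
  · exfalso
    obtain ⟨δ, hδ, δ', hδ', hled, hexp, r₀, hr₀, hsurj⟩ := h (L τ)
    obtain ⟨η₁, hη₁, hh₁⟩ := Metric.continuousOn_iff.1 hLcont τ hτS.1 δ hδ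
    obtain ⟨η₂, hη₂, hh₂⟩ := Metric.continuousAt_iff.1 hγcont.continuousAt δ hδ
    have hηm : 0 < min η₁ η₂ := lt_min hη₁ hη₂
    set t : ℝ := min 1 (τ + min η₁ η₂ / 2) with htdef
    have hτt : τ < t := lt_min hτlt (by linarith)
    have htI : t ∈ Icc (0:ℝ) 1 := ⟨hτS.1.1.trans hτt.le, min_le_left _ _⟩
    have htd : dist t τ < min η₁ η₂ := by
      rw [Real.dist_eq, abs_of_nonneg (by linarith)]
      have h1 : t ≤ τ + min η₁ η₂ / 2 := min_le_right _ _
      linarith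
    have hL_t : L t ∈ closedBall (L τ) δ := by
      rw [mem_closedBall]
      exact (hh₁ t htI (htd.trans_le (min_le_left _ _))).le
    have hγ_t : γ t ∈ closedBall (L τ) δ := by
      rw [mem_closedBall, hτS.2]
      exact (hh₂ (htd.trans_le (min_le_right _ _))).le
    have h1 := hexp (L t) hL_t (γ t) hγ_t
    have h2 : f (γ t) = p t := rfl
    rw [hP1' t htI, h2, sub_self, norm_zero] at h1
    have h3 : L t = γ t := by
      have h4 : ‖L t - γ t‖ ≤ 0 := by nlinarith
      rw [← sub_eq_zero, ← norm_le_zero_iff]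
      exact h4
    have htS : t ∈ S := ⟨htI, h3⟩
    exact absurd (le_csSup hSbdd htS) (not_le.2 hτt)
end GIAux

set_option maxHeartbeats 1000000 in
/-- Global invertibility via strict first-order approximations: if the
continuous map `f` admits at each `x` a strict first-order approximation `A x`
(`A x x = f x` and `lip(f - A x, x) = 0`) which is strongly regular around `x`,
and `α = inf_x lop(A x, x) > 0`, then `f` is a bijection of `ℝⁿ` whose inverse
is Lipschitz with constant `α⁻¹`. -/
theorem stmt9 (n : ℕ) (f : EuclideanSpace ℝ (Fin n) → EuclideanSpace ℝ (Fin n))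
    (hcont : Continuous f)
    (A : EuclideanSpace ℝ (Fin n) →
          EuclideanSpace ℝ (Fin n) → EuclideanSpace ℝ (Fin n))
    (happrox : ∀ x, A x x = f x ∧ lipBound (fun t => f t - A x t) x = 0 ∧
      StronglyRegularAround (A x) x)
    (hα : 0 < ⨅ x, lopBound (A x) x) :
    Function.Bijective f ∧
    ∃ g : EuclideanSpace ℝ (Fin n) → EuclideanSpace ℝ (Fin n),
      (∀ x, g (f x) = x) ∧ (∀ y, f (g y) = y) ∧
      ∀ y₁ y₂, (‖g y₁ - g y₂‖₊ : ℝ≥0∞) ≤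
        (⨅ x, lopBound (A x) x)⁻¹ * (‖y₁ - y₂‖₊ : ℝ≥0∞) := by
  classical
  set α : ℝ≥0∞ := ⨅ x, lopBound (A x) x with hαdef
  have hGIL : ∀ c : ℝ≥0, 0 < c → (c:ℝ≥0∞) < α → ∀ x, GIL1 f (c:ℝ) x := by
    intro c hc0 hcα x
    obtain ⟨hAx, hlip0, hsr⟩ := happrox x
    have h1 : (c:ℝ≥0∞) < lopBound (A x) x := hcα.trans_le (iInf_le _ x)
    unfold lopBound at h1
    rw [lt_iSup_iff] at h1
    obtain ⟨β, hβ⟩ := h1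
    rw [lt_iSup_iff] at hβ
    obtain ⟨⟨hβpos, hβlin⟩, hcβ⟩ := hβ
    have hcβnn : c < β := by exact_mod_cast hcβ
    have hcβ' : (c:ℝ) < (β:ℝ) := by exact_mod_cast hcβnn
    have h2 : lipBound (fun t => f t - A x t) x < ((β - c : ℝ≥0) : ℝ≥0∞) := by
      rw [hlip0]
      exact ENNReal.coe_pos.2 (tsub_pos_iff_lt.2 hcβnn)
    unfold lipBound at h2
    rw [iInf_lt_iff] at h2
    obtain ⟨ℓ, hℓ⟩ := h2
    rw [iInf_lt_iff] at hℓ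
    obtain ⟨⟨hℓpos, hℓlip⟩, hℓlt⟩ := hℓ
    have hℓnn : ℓ < β - c := by exact_mod_cast hℓlt
    have hℓlt' : (ℓ:ℝ) < (β:ℝ) - (c:ℝ) := by
      have h3 : ((β - c : ℝ≥0):ℝ) = (β:ℝ) - (c:ℝ) := NNReal.coe_sub hcβnn.le
      have h4 : (ℓ:ℝ) < ((β - c : ℝ≥0):ℝ) := by exact_mod_cast hℓnn
      linarith
    obtain ⟨-, hreg⟩ := hsr
    obtain ⟨U, hU, V, hV, hopen⟩ := hβlin
    obtain ⟨W, hW, hWlip⟩ := hℓlip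
    exact gil_key f (A x) x hcont (c:ℝ) (β:ℝ) (ℓ:ℝ) (by exact_mod_cast hc0)
      hcβ' ℓ.coe_nonneg hℓlt' hAx ⟨U, hU, V, hV, hopen⟩ hreg ⟨W, hW, hWlip⟩
  obtain ⟨ε, hε0, hεα⟩ := exists_between hα
  have hεne : ε ≠ ⊤ := hεα.ne_top
  set c₀ : ℝ≥0 := ε.toNNReal with hc₀def
  have hc₀ : (c₀:ℝ≥0∞) = ε := ENNReal.coe_toNNReal hεne
  have hc₀pos : 0 < c₀ := ENNReal.toNNReal_pos hε0.ne' hεne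
  have hc₀α : (c₀:ℝ≥0∞) < α := by rw [hc₀]; exact hεα
  have hG := hGIL c₀ hc₀pos hc₀α
  have hc₀R : (0:ℝ) < (c₀:ℝ) := by exact_mod_cast hc₀pos
  have hinj := gil_inj f hcont _ hc₀R hG
  have hsurj := gil_surj f hcont _ hc₀R hG
  set g := fun y => (hsurj y).choose with hgdef
  have hgf : ∀ y, f (g y) = y := fun y => (hsurj y).choose_spec
  have hfg : ∀ x, g (f x) = x := fun x => hinj (hgf (f x))
  refine ⟨⟨hinj, hsurj⟩, g, hfg, hgf, ?_⟩
  intro y₁ y₂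
  have hreal : ∀ c : ℝ≥0, 0 < c → (c:ℝ≥0∞) < α →
      (c:ℝ) * ‖g y₁ - g y₂‖ ≤ ‖y₁ - y₂‖ := fun c hc0 hcα =>
    gil_lip f (c:ℝ) (by exact_mod_cast hc0) (hGIL c hc0 hcα) hinj g hgf y₁ y₂
  have hmul : ∀ r : ℝ≥0, (r:ℝ≥0∞) < α →
      (r:ℝ≥0∞) * (‖g y₁ - g y₂‖₊ : ℝ≥0∞) ≤ (‖y₁ - y₂‖₊ : ℝ≥0∞) := by
    intro r hr
    rcases eq_or_ne r 0 with rfl | hr0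
    · simp
    · have h1 := hreal r (pos_iff_ne_zero.2 hr0) hr
      rw [← ENNReal.coe_mul, ENNReal.coe_le_coe, ← NNReal.coe_le_coe,
        NNReal.coe_mul, coe_nnnorm, coe_nnnorm]
      exact h1
  have hαD : α * (‖g y₁ - g y₂‖₊ : ℝ≥0∞) ≤ (‖y₁ - y₂‖₊ : ℝ≥0∞) := by
    rcases eq_or_ne ((‖g y₁ - g y₂‖₊ : ℝ≥0∞)) 0 with hD0 | hD0
    · rw [hD0, mul_zero]; exact zero_le
    · rw [← ENNReal.le_div_iff_mul_le (Or.inl hD0) (Or.inl ENNReal.coe_ne_top)]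
      refine ENNReal.le_of_forall_nnreal_lt fun r hr => ?_
      rw [ENNReal.le_div_iff_mul_le (Or.inl hD0) (Or.inl ENNReal.coe_ne_top)]
      exact hmul r hr
  have hfin : (‖y₁ - y₂‖₊ : ℝ≥0∞) / α = α⁻¹ * (‖y₁ - y₂‖₊ : ℝ≥0∞) := by
    rw [div_eq_mul_inv, mul_comm]
  rw [← hfin, ENNReal.le_div_iff_mul_le (Or.inl hα.ne') (Or.inr ENNReal.coe_ne_top),
    mul_comm]
  exact hαD
end
end

section
/- Let θ₊, θ₋ ∈ ℝ with θ₋ · θ₊ > 0, and let h : ℝ → ℝ be defined by h(x) = θ₊x for x ≥ 0 and h(x) = θ₋x for x < 0. Then the metric injection bound of h around 0 equals min{|θ₊|, |θ₋|}: inj(h, 0) = min{|θ₊|, |θ₋|}. -/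
open Set

noncomputable def kink (θp θm x : ℝ) : ℝ := if 0 ≤ x then θp * x else θm * x

/-- The supremum of this set is the metric injection bound `inj(g, 0)`. -/
def injConstantsAtZero (g : ℝ → ℝ) : Set ℝ :=
  {β : ℝ | 0 < β ∧ ∃ δ > (0:ℝ), ∀ x₁ ∈ Icc (-δ) δ, ∀ x₂ ∈ Icc (-δ) δ,
    β * |x₁ - x₂| ≤ |g x₁ - g x₂|}

/-- Since `a` and `b` have the same sign, so do `a * u` and `b * v`, and their absolute values add. -/
lemma min_abs_mul_add_le_abs_mul_add {a b u v : ℝ} (hab : 0 < a * b) (hu : 0 ≤ u) (hv : 0 ≤ v) :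
    min |a| |b| * (u + v) ≤ |a * u + b * v| := by
  have hsign : 0 ≤ a * u ∧ 0 ≤ b * v ∨ a * u ≤ 0 ∧ b * v ≤ 0 := by
    rcases mul_pos_iff.mp hab with ⟨ha, hb⟩ | ⟨ha, hb⟩
    · exact .inl ⟨by positivity, by positivity⟩
    · exact .inr ⟨mul_nonpos_of_nonpos_of_nonneg ha.le hu,
        mul_nonpos_of_nonpos_of_nonneg hb.le hv⟩
  calc min |a| |b| * (u + v) = min |a| |b| * u + min |a| |b| * v := mul_add _ _ _
    _ ≤ |a| * u + |b| * v := by gcongr <;> simp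
    _ = |a * u + b * v| := by
      rw [(abs_add_eq_add_abs_iff _ _).mpr hsign, abs_mul, abs_mul, abs_of_nonneg hu,
        abs_of_nonneg hv]

lemma min_abs_mul_abs_sub_le_abs_kink_sub {θp θm : ℝ} (hθ : 0 < θm * θp) (x₁ x₂ : ℝ) :
    min |θp| |θm| * |x₁ - x₂| ≤ |kink θp θm x₁ - kink θp θm x₂| := by
  have hθ' : 0 < θp * θm := by rwa [mul_comm]
  have across : ∀ {y z : ℝ}, 0 ≤ y → z < 0 →
      min |θp| |θm| * |y - z| ≤ |θp * y - θm * z| := fun {y z} hy hz => by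
    have := min_abs_mul_add_le_abs_mul_add hθ' hy (neg_nonneg.mpr hz.le)
    rwa [← sub_eq_add_neg, mul_neg, ← sub_eq_add_neg, ← abs_of_nonneg (by linarith : 0 ≤ y - z)]
      at this
  unfold kink
  split_ifs with h₁ h₂ h₂
  · rw [← mul_sub, abs_mul]
    exact mul_le_mul_of_nonneg_right (min_le_left _ _) (abs_nonneg _)
  · exact across h₁ (not_le.mp h₂)
  · rw [abs_sub_comm, abs_sub_comm (θm * x₁)]
    exact across h₂ (not_le.mp h₁)
  · rw [← mul_sub, abs_mul]
    exact mul_le_mul_of_nonneg_right (min_le_right _ _) (abs_nonneg _)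

lemma le_abs_of_mul_abs_le_abs_mul {β θ x : ℝ} (hx : x ≠ 0) (h : β * |x| ≤ |θ * x|) :
    β ≤ |θ| := by
  rw [abs_mul] at h
  exact le_of_mul_le_mul_right h (abs_pos.mpr hx)

lemma isGreatest_injConstantsAtZero_kink {θp θm : ℝ} (hθ : 0 < θm * θp) :
    IsGreatest (injConstantsAtZero (kink θp θm)) (min |θp| |θm|) := by
  have hp : θp ≠ 0 := by rintro rfl; simp at hθ
  have hm : θm ≠ 0 := by rintro rfl; simp at hθ
  refine ⟨⟨lt_min (abs_pos.mpr hp) (abs_pos.mpr hm), 1, one_pos,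
    fun x₁ _ x₂ _ => min_abs_mul_abs_sub_le_abs_kink_sub hθ x₁ x₂⟩, ?_⟩
  rintro β ⟨-, δ, hδ, hβ⟩
  have hδ_mem : δ ∈ Icc (-δ) δ := ⟨by linarith, le_rfl⟩
  have hnegδ_mem : -δ ∈ Icc (-δ) δ := ⟨le_rfl, by linarith⟩
  have hzero_mem : (0 : ℝ) ∈ Icc (-δ) δ := ⟨by linarith, hδ.le⟩
  have hright := hβ δ hδ_mem 0 hzero_mem
  have hleft := hβ (-δ) hnegδ_mem 0 hzero_mem
  simp only [kink, le_refl, if_true, mul_zero, sub_zero, if_pos hδ.le,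
    if_neg (show ¬0 ≤ -δ by linarith)] at hright hleft
  exact le_min (le_abs_of_mul_abs_le_abs_mul hδ.ne' hright)
    (le_abs_of_mul_abs_le_abs_mul (neg_ne_zero.mpr hδ.ne') hleft)

/-- For the p.h. function `h(x) = θ₊x (x ≥ 0), θ₋x (x < 0)` with `θ₋ · θ₊ > 0`,
the metric injection bound of `h` around `0` equals `min {|θ₊|, |θ₋|}`. -/
theorem stmt13 (θp θm : ℝ) (hθ : 0 < θm * θp) (h : ℝ → ℝ)
    (hh : ∀ x : ℝ, h x = if 0 ≤ x then θp * x else θm * x) :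
    sSup {β : ℝ | 0 < β ∧ ∃ δ > (0:ℝ),
        ∀ x₁ ∈ Icc (-δ) δ, ∀ x₂ ∈ Icc (-δ) δ,
          β * |x₁ - x₂| ≤ |h x₁ - h x₂|} = min |θp| |θm| := by
  obtain rfl : h = kink θp θm := funext hh
  exact (isGreatest_injConstantsAtZero_kink hθ).csSup_eq
end

section
/- Let f : ℝⁿ → ℝᵐ be continuous and linearly open around x̄ with constant α > 0, i.e. there exist neighbourhoods U of x̄ and V of f(x̄) such that B°(f(x), αr) ∩ V ⊆ f(B°(x, r)) for all x ∈ U and r > 0. Then for every α' ∈ (0, α), f is α'-covering at x̄: for every ε > 0 there exists r ∈ (0, ε] with B̄(f(x̄), α'r) ⊆ f(B̄(x̄, r)). Consequently lop(f, x̄) ≤ cov(f, x̄), where cov(f, x̄) is the supremum of all α' > 0 for which f is α'-covering at x̄. -/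
open Metric Set
open scoped ENNReal NNReal

noncomputable section

variable {E F : Type*} [NormedAddCommGroup E] [NormedAddCommGroup F]

/-- Around `x = xb` itself, the radius `r` can be taken so small that `B°(f xb, α r) ⊆ V`,
which makes the intersection with `V` in linear openness harmless; shrinking `α` to
`α' < α` then turns the open ball into a closed one. -/
theorem LinOpenWith.alphaCoveringAt {f : E → F} {xb : E} {α α' : ℝ}
    (hlo : LinOpenWith f xb α) (hα' : 0 < α') (hα'α : α' < α) :
    AlphaCoveringAt f xb α' := by
  obtain ⟨U, hU, V, hV, hopen⟩ := hlo
  obtain ⟨δ, hδ, hballV⟩ := Metric.mem_nhds_iff.mp hV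
  have hα : 0 < α := hα'.trans hα'α
  intro ε hε
  set r := min ε (δ / α)
  have hr : 0 < r := by positivity
  have hαr : α * r ≤ δ := by
    calc α * r ≤ α * (δ / α) := by gcongr; exact min_le_right _ _
      _ = δ := by field_simp
  refine ⟨r, hr, min_le_left _ _, fun y hy => ?_⟩
  have hy_ball : y ∈ ball (f xb) (α * r) :=
    closedBall_subset_ball (by gcongr) hy
  have hy_V : y ∈ V := hballV (ball_subset_ball hαr hy_ball)
  exact image_mono ball_subset_closedBall
    (hopen xb (mem_of_mem_nhds hU) r hr ⟨hy_ball, hy_V⟩)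

theorem lopBound_le_covBound (f : E → F) (xb : E) : lopBound f xb ≤ covBound f xb := by
  refine iSup₂_le fun β ⟨_, hβ⟩ => ENNReal.le_of_forall_pos_nnreal_lt fun γ hγ hγβ => ?_
  have hcov : AlphaCoveringAt f xb γ :=
    hβ.alphaCoveringAt (NNReal.coe_pos.mpr hγ) (mod_cast hγβ)
  exact le_iSup₂ (f := fun (α : ℝ≥0) (_ : 0 < α ∧ AlphaCoveringAt f xb α) => (α : ℝ≥0∞))
    γ ⟨hγ, hcov⟩

theorem stmt14_general (n m : ℕ)
    (f : EuclideanSpace ℝ (Fin n) → EuclideanSpace ℝ (Fin m))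
    (xb : EuclideanSpace ℝ (Fin n)) (α : ℝ)
    (hlo : LinOpenWith f xb α) :
    (∀ α' : ℝ, 0 < α' → α' < α → AlphaCoveringAt f xb α') ∧
    lopBound f xb ≤ covBound f xb :=
  ⟨fun _ hα' hα'α => hlo.alphaCoveringAt hα' hα'α, lopBound_le_covBound f xb⟩

/-- A continuous map linearly open around `xb` with constant `α` is
`α'`-covering at `xb` for every `α' ∈ (0, α)`; consequently
`lop(f, xb) ≤ cov(f, xb)`. -/
theorem stmt14 (n m : ℕ)
    (f : EuclideanSpace ℝ (Fin n) → EuclideanSpace ℝ (Fin m))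
    (xb : EuclideanSpace ℝ (Fin n)) (α : ℝ) (hα : 0 < α)
    (hcont : Continuous f)
    (hlo : LinOpenWith f xb α) :
    (∀ α' : ℝ, 0 < α' → α' < α → AlphaCoveringAt f xb α') ∧
    lopBound f xb ≤ covBound f xb :=
  stmt14_general n m f xb α hlo
end
end
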